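/- arXiv:1611.05988 — 7 statements merged into one kernel-verified Lean document; each statement's English description precedes it below -/
import Mathlib

section
/- If X and Y are metric spaces, f : X → Y is a coarse embedding, and Y has asymptotic property C, then X has asymptotic property C. -/
open scoped ENNReal
open Filter Set

noncomputable section

/-- Distance between two sets with respect to a distance function `d`,
as the infimum in `ℝ≥0∞` (so `⊤` if either set is empty). -/
def setDistD {α : Type*} (d : α → α → ℝ) (A B : Set α) : ℝ≥0∞ :=
  ⨅ (a) (_ : a ∈ A) (b) (_ : b ∈ B), ENNReal.ofReal (d a b)

/-- A family of subsets is `R`-disjoint if any two distinct members are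
at distance `> R`. -/
def RDisjointD {α : Type*} (d : α → α → ℝ) (R : ℝ) (𝒰 : Set (Set α)) : Prop :=
  ∀ A ∈ 𝒰, ∀ B ∈ 𝒰, A ≠ B → ENNReal.ofReal R < setDistD d A B

/-- Every member of the family has diameter at most `D`. -/
def MeshLE {α : Type*} (d : α → α → ℝ) (D : ℝ) (𝒰 : Set (Set α)) : Prop :=
  ∀ A ∈ 𝒰, ∀ x ∈ A, ∀ y ∈ A, d x y ≤ D

/-- A family is uniformly bounded if the diameters of its members have a
common finite bound. -/
def UBoundedD {α : Type*} (d : α → α → ℝ) (𝒰 : Set (Set α)) : Prop :=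
  ∃ D : ℝ, MeshLE d D 𝒰

/-- The family covers the whole space. -/
def CoversD {α : Type*} (𝒰 : Set (Set α)) : Prop := ∀ x : α, ∃ A ∈ 𝒰, x ∈ A

/-- Asymptotic property C for a space with distance function `d`: for every
nondecreasing sequence `R₀ ≤ R₁ ≤ ⋯` of positive reals there are `n` and
uniformly bounded `R i`-disjoint families `𝒰 i`, `i = 0, …, n`, whose union
covers the space. -/
def APCD {α : Type*} (d : α → α → ℝ) : Prop :=
  ∀ R : ℕ → ℝ, (∀ i, 0 < R i) → Monotone R →
    ∃ (n : ℕ) (𝒰 : ℕ → Set (Set α)),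
      (∀ i ≤ n, RDisjointD d (R i) (𝒰 i) ∧ UBoundedD d (𝒰 i)) ∧
      CoversD (⋃ i ≤ n, 𝒰 i)

/-- `f` is a coarse embedding: there are nondecreasing functions
`ρ₋, ρ₊` tending to `∞` with `ρ₋(d(x,y)) ≤ d(f x, f y) ≤ ρ₊(d(x,y))`. -/
def IsCoarseEmbeddingD {α β : Type*} (dα : α → α → ℝ) (dβ : β → β → ℝ)
    (f : α → β) : Prop :=
  ∃ ρm ρp : ℝ → ℝ, Monotone ρm ∧ Monotone ρp ∧
    Tendsto ρm atTop atTop ∧ Tendsto ρp atTop atTop ∧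
    ∀ x y, ρm (dα x y) ≤ dβ (f x) (f y) ∧ dβ (f x) (f y) ≤ ρp (dα x y)

/-- The shortest-path distance of a graph, as a real number. -/
def gdist {V : Type*} (G : SimpleGraph V) (x y : V) : ℝ := G.dist x y

/-- A subset `U` is `(N, R)`-large scale doubling: for every center `x` and
every `r ≥ R`, the set `B_{2r}(x) ∩ U` can be covered by `N` balls of
radius `r` with centers in the space. -/
def LSDoubling {α : Type*} (d : α → α → ℝ) (N : ℕ) (R : ℝ) (U : Set α) : Prop :=
  ∀ x : α, ∀ r : ℝ, R ≤ r →
    ∃ c : Fin N → α, {y | d x y < 2 * r} ∩ U ⊆ ⋃ j, {y | d (c j) y ≤ r}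

/-- A family is uniformly large scale doubling: there is `(N, R)` making every
member `(N, R)`-large scale doubling and every finite union of members
`(N, R')`-large scale doubling for some `R' > 0`. -/
def ULSDoubling {α : Type*} (d : α → α → ℝ) (𝒰 : Set (Set α)) : Prop :=
  ∃ (N : ℕ) (R : ℝ), (∀ U ∈ 𝒰, LSDoubling d N R U) ∧
    ∀ 𝒱 ⊆ 𝒰, 𝒱.Finite → ∃ R' > 0, LSDoubling d N R' (⋃₀ 𝒱)

/-- A family is weakly uniformly large scale doubling: there is `(N, R)`
making every member `(N, R)`-large scale doubling. -/
def WULSDoubling {α : Type*} (d : α → α → ℝ) (𝒰 : Set (Set α)) : Prop :=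
  ∃ (N : ℕ) (R : ℝ), ∀ U ∈ 𝒰, LSDoubling d N R U

/-- Hyperbolic property C: for every sequence of positive reals `R i` there
are `n` and `R i`-disjoint families whose union is a uniformly large scale
doubling cover of the space. -/
def HPCD {α : Type*} (d : α → α → ℝ) : Prop :=
  ∀ R : ℕ → ℝ, (∀ i, 0 < R i) →
    ∃ (n : ℕ) (𝒰 : ℕ → Set (Set α)),
      (∀ i ≤ n, RDisjointD d (R i) (𝒰 i)) ∧
      CoversD (⋃ i ≤ n, 𝒰 i) ∧ ULSDoubling d (⋃ i ≤ n, 𝒰 i)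

/-- Weak hyperbolic property C. -/
def WHPCD {α : Type*} (d : α → α → ℝ) : Prop :=
  ∀ R : ℕ → ℝ, (∀ i, 0 < R i) →
    ∃ (n : ℕ) (𝒰 : ℕ → Set (Set α)),
      (∀ i ≤ n, RDisjointD d (R i) (𝒰 i)) ∧
      CoversD (⋃ i ≤ n, 𝒰 i) ∧ WULSDoubling d (⋃ i ≤ n, 𝒰 i)

/-- `𝒳` is `R`-decomposable over `𝒴`: every member of `𝒳` is covered by the
union of two `R`-disjoint families contained in `𝒴`. -/
def DecompD {α : Type*} (d : α → α → ℝ) (R : ℝ) (𝒳 𝒴 : Set (Set α)) : Prop :=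
  ∀ X ∈ 𝒳, ∃ 𝒰₁ 𝒰₂ : Set (Set α), RDisjointD d R 𝒰₁ ∧ RDisjointD d R 𝒰₂ ∧
    𝒰₁ ∪ 𝒰₂ ⊆ 𝒴 ∧ X ⊆ ⋃₀ (𝒰₁ ∪ 𝒰₂)

/-- Straight finite decomposition complexity of a metric family `𝒳` (of
subsets of an ambient space): for every nondecreasing sequence of positive
reals there is a finite chain of decompositions ending in a uniformly
bounded family. -/
def SFDCD {α : Type*} (d : α → α → ℝ) (𝒳 : Set (Set α)) : Prop :=
  ∀ R : ℕ → ℝ, (∀ i, 0 < R i) → Monotone R →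
    ∃ (n : ℕ) (𝒱 : ℕ → Set (Set α)),
      DecompD d (R 0) 𝒳 (𝒱 0) ∧
      (∀ i < n, DecompD d (R (i + 1)) (𝒱 i) (𝒱 (i + 1))) ∧
      UBoundedD d (𝒱 n)

/-- `asdim ≤ n` for a single space: for every `R > 0` there are `n + 1`
uniformly bounded `R`-disjoint families covering the space. -/
def AsdimLE {α : Type*} (d : α → α → ℝ) (n : ℕ) : Prop :=
  ∀ R : ℝ, 0 < R → ∃ 𝒰 : Fin (n + 1) → Set (Set α),
    (∀ i, RDisjointD d R (𝒰 i) ∧ UBoundedD d (𝒰 i)) ∧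
    CoversD (⋃ i, 𝒰 i)

/-- `asdim {X_α} ≤ n` uniformly for a family of subsets of an ambient space:
for every `R > 0` there is `D` such that every member is covered by `n + 1`
`R`-disjoint families of its subsets of mesh at most `D`. -/
def AsdimFamLE {α : Type*} (d : α → α → ℝ) (𝒳 : Set (Set α)) (n : ℕ) : Prop :=
  ∀ R : ℝ, 0 < R → ∃ D : ℝ, 0 ≤ D ∧
    ∀ X ∈ 𝒳, ∃ 𝒰 : Fin (n + 1) → Set (Set α),
      (∀ i, RDisjointD d R (𝒰 i) ∧ MeshLE d D (𝒰 i) ∧ ∀ A ∈ 𝒰 i, A ⊆ X) ∧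
      ∀ x ∈ X, ∃ i, ∃ A ∈ 𝒰 i, x ∈ A

/-- The metric `d((a_i),(b_i)) = Σᵢ (i+1)·dᵢ(aᵢ,bᵢ)` on a (restricted)
product, indexing coordinates by `0, 1, 2, …` with weights `1, 2, 3, …`. -/
def dRP {V : ℕ → Type*} (d : ∀ i, V i → V i → ℝ) (a b : ∀ i, V i) : ℝ :=
  ∑' i : ℕ, ((i : ℝ) + 1) * d i (a i) (b i)

/-- a coarse embedding into a space with asymptotic property C
pulls back asymptotic property C. -/
theorem coarseEmbedding_apc {X Y : Type*} [MetricSpace X] [MetricSpace Y]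
    (f : X → Y) (hf : IsCoarseEmbeddingD dist dist f)
    (hY : APCD (fun y y' : Y => dist y y')) :
    APCD (fun x x' : X => dist x x') := by
  obtain ⟨ρm, ρp, hρm, hρp, hρmT, hρpT, hρ⟩ := hf
  intro R hRpos hRmono
  set S : ℕ → ℝ := fun i => max (ρp (R i + 1)) 0 + 1 with hS
  have hSpos : ∀ i, 0 < S i := fun i => by
    have := le_max_right (ρp (R i + 1)) (0 : ℝ); simp only [hS]; linarith
  have hSmono : Monotone S := fun i j hij => by
    have h1 : R i + 1 ≤ R j + 1 := by linarith [hRmono hij]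
    have := hρp h1
    simp only [hS]
    have : max (ρp (R i + 1)) 0 ≤ max (ρp (R j + 1)) 0 := max_le_max this le_rfl
    linarith
  obtain ⟨n, 𝒱, h𝒱, hcov⟩ := hY S hSpos hSmono
  refine ⟨n, fun i => (fun V => f ⁻¹' V) '' 𝒱 i, ?_, ?_⟩
  · intro i hi
    obtain ⟨hdisj, D, hD⟩ := h𝒱 i hi
    constructor
    · rintro A ⟨V, hV, rfl⟩ B ⟨W, hW, rfl⟩ hAB
      have hVW : V ≠ W := fun h => hAB (by rw [h])
      have hd := hdisj V hV W hW hVW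
      have key : ∀ a ∈ f ⁻¹' V, ∀ b ∈ f ⁻¹' W, R i + 1 ≤ dist a b := by
        intro a ha b hb
        have hle : setDistD (fun y y' : Y => dist y y') V W ≤
            ENNReal.ofReal (dist (f a) (f b)) := by
          refine iInf_le_of_le (f a) (iInf_le_of_le ha (iInf_le_of_le (f b) ?_))
          exact iInf_le _ hb
        have h1 : ENNReal.ofReal (S i) < ENNReal.ofReal (dist (f a) (f b)) :=
          lt_of_lt_of_le hd hle
        have h2 : S i < dist (f a) (f b) := by
          by_contra h
          push_neg at h
          exact absurd h1 (not_lt.mpr (ENNReal.ofReal_le_ofReal h))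
        by_contra h
        push_neg at h
        have h3 : ρp (dist a b) ≤ ρp (R i + 1) := hρp (le_of_lt h)
        have h4 : dist (f a) (f b) ≤ ρp (dist a b) := (hρ a b).2
        have h5 : ρp (R i + 1) < S i := by
          simp only [hS]; linarith [le_max_left (ρp (R i + 1)) (0 : ℝ)]
        linarith
      have hbound : ENNReal.ofReal (R i + 1) ≤
          setDistD (fun x x' : X => dist x x') (f ⁻¹' V) (f ⁻¹' W) :=
        le_iInf fun a => le_iInf fun ha => le_iInf fun b => le_iInf fun hb =>
          ENNReal.ofReal_le_ofReal (key a ha b hb)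
      refine lt_of_lt_of_le ?_ hbound
      exact (ENNReal.ofReal_lt_ofReal_iff_of_nonneg (le_of_lt (hRpos i))).mpr
        (by linarith)
    · obtain ⟨T, hT⟩ := (tendsto_atTop.mp hρmT (D + 1)).exists_forall_of_atTop
      refine ⟨T, ?_⟩
      rintro A ⟨V, hV, rfl⟩ a ha b hb
      have h1 : dist (f a) (f b) ≤ D := hD V hV _ ha _ hb
      by_contra h
      push_neg at h
      have h2 : D + 1 ≤ ρm (dist a b) := hT _ (le_of_lt h)
      have h3 : ρm (dist a b) ≤ dist (f a) (f b) := (hρ a b).1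
      linarith
  · intro x
    obtain ⟨A, hA, hx⟩ := hcov (f x)
    simp only [mem_iUnion] at hA ⊢
    obtain ⟨i, hi, hA⟩ := hA
    exact ⟨f ⁻¹' A, ⟨i, hi, ⟨A, hA, rfl⟩⟩, hx⟩
end
end

section
/- If X and Y are metric spaces each having asymptotic property C, then the product X × Y (with, e.g., the sup metric or any coarsely equivalent product metric) has asymptotic property C. -/
open scoped ENNReal
open Filter Set

noncomputable section

lemma setDistD_le_of_mem {α : Type*} (d : α → α → ℝ) {A B : Set α} {a b : α}
    (ha : a ∈ A) (hb : b ∈ B) : setDistD d A B ≤ ENNReal.ofReal (d a b) := by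
  unfold setDistD
  exact (iInf₂_le a ha).trans (iInf₂_le b hb)

lemma le_setDistD {α : Type*} (d : α → α → ℝ) {A B : Set α} {c : ℝ≥0∞}
    (h : ∀ a ∈ A, ∀ b ∈ B, c ≤ ENNReal.ofReal (d a b)) : c ≤ setDistD d A B :=
  le_iInf₂ fun a ha => le_iInf₂ fun b hb => h a ha b hb

lemma setDistD_prod_left {X Y : Type*} [MetricSpace X] [MetricSpace Y]
    (U U' : Set X) (V V' : Set Y) :
    setDistD (fun x x' : X => dist x x') U U' ≤
      setDistD (fun p q : X × Y => dist p q) (U ×ˢ V) (U' ×ˢ V') := by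
  apply le_setDistD
  rintro ⟨a, b⟩ ⟨ha, hb⟩ ⟨a', b'⟩ ⟨ha', hb'⟩
  refine (setDistD_le_of_mem _ ha ha').trans (ENNReal.ofReal_le_ofReal ?_)
  rw [Prod.dist_eq]
  exact le_max_left _ _

lemma setDistD_prod_right {X Y : Type*} [MetricSpace X] [MetricSpace Y]
    (U U' : Set X) (V V' : Set Y) :
    setDistD (fun y y' : Y => dist y y') V V' ≤
      setDistD (fun p q : X × Y => dist p q) (U ×ˢ V) (U' ×ˢ V') := by
  apply le_setDistD
  rintro ⟨a, b⟩ ⟨ha, hb⟩ ⟨a', b'⟩ ⟨ha', hb'⟩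
  refine (setDistD_le_of_mem _ hb hb').trans (ENNReal.ofReal_le_ofReal ?_)
  rw [Prod.dist_eq]
  exact le_max_right _ _

/-- asymptotic property C is preserved by finite products
(with the sup metric, which is the product metric in Mathlib). -/
theorem apc_prod {X Y : Type*} [MetricSpace X] [MetricSpace Y]
    (hX : APCD (fun x x' : X => dist x x'))
    (hY : APCD (fun y y' : Y => dist y y')) :
    APCD (fun p q : X × Y => dist p q) := by
  intro R hRpos hRmono
  -- For each shift `k`, apply APC of `Y` to the shifted sequence `j ↦ R (k + j)`.
  have hYk : ∀ k : ℕ, ∃ (mk : ℕ) (𝒱 : ℕ → Set (Set Y)),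
      (∀ j ≤ mk, RDisjointD (fun y y' : Y => dist y y') (R (k + j)) (𝒱 j) ∧
        UBoundedD (fun y y' : Y => dist y y') (𝒱 j)) ∧
      CoversD (⋃ j ≤ mk, 𝒱 j) := fun k =>
    hY (fun j => R (k + j)) (fun j => hRpos _) (fun a b hab => hRmono (by omega))
  choose m 𝒱 hV hVcov using hYk
  -- Block starting points.
  let K : ℕ → ℕ := fun t => Nat.rec 0 (fun _ kt => kt + m kt + 1) t
  have hKsucc : ∀ t, K (t + 1) = K t + m (K t) + 1 := fun t => rfl
  have hKmono : Monotone K := monotone_nat_of_le_succ (fun t => by rw [hKsucc]; omega)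
  -- Apply APC of `X` to the sequence of ends of blocks.
  obtain ⟨n, 𝒰, hU, hUcov⟩ := hX (fun t => R (K t + m (K t)))
    (fun t => hRpos _)
    (fun a b hab => by
      have h1 := hKmono (Nat.succ_le_succ hab)
      rw [hKsucc, hKsucc] at h1
      exact hRmono (by omega))
  have huniq : ∀ q t t', K t ≤ q → q ≤ K t + m (K t) → K t' ≤ q →
      q ≤ K t' + m (K t') → t = t' := by
    intro q t t' h1 h2 h3 h4
    by_contra hne
    rcases Nat.lt_or_ge t t' with h | h
    · have := hKmono (show t + 1 ≤ t' from h)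
      rw [hKsucc] at this; omega
    · have ht : t' < t := by omega
      have := hKmono (show t' + 1 ≤ t from ht)
      rw [hKsucc] at this; omega
  let 𝒲 : ℕ → Set (Set (X × Y)) := fun q =>
    {A | ∃ t, t ≤ n ∧ K t ≤ q ∧ q ≤ K t + m (K t) ∧
      ∃ U ∈ 𝒰 t, ∃ V ∈ 𝒱 (K t) (q - K t), A = U ×ˢ V}
  refine ⟨K (n + 1) - 1, 𝒲, ?_, ?_⟩
  · intro q hq
    constructor
    · -- R q - disjointness
      rintro A ⟨t, htn, h1, h2, U, hUm, V, hVm, rfl⟩ B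
        ⟨t', htn', h1', h2', U', hUm', V', hVm', rfl⟩ hAB
      have hte : t = t' := huniq q t t' h1 h2 h1' h2'
      subst hte
      by_cases hUU : U = U'
      · subst hUU
        have hVV : V ≠ V' := fun h => hAB (by rw [h])
        have hd := (hV (K t) (q - K t) (by omega)).1 V hVm V' hVm' hVV
        rw [show K t + (q - K t) = q by omega] at hd
        exact hd.trans_le (setDistD_prod_right U U V V')
      · have hd := (hU t htn).1 U hUm U' hUm' hUU
        calc ENNReal.ofReal (R q) ≤ ENNReal.ofReal (R (K t + m (K t))) :=
              ENNReal.ofReal_le_ofReal (hRmono (by omega))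
          _ < setDistD (fun x x' : X => dist x x') U U' := hd
          _ ≤ _ := setDistD_prod_left U U' V V'
    · -- uniform boundedness
      rcases Set.eq_empty_or_nonempty (𝒲 q) with he | ⟨A₀, t, htn, h1, h2, U₀, hU₀, V₀, hV₀, rfl⟩
      · refine ⟨0, fun A hA => ?_⟩
        rw [he] at hA
        exact absurd hA (Set.notMem_empty A)
      · obtain ⟨Dx, hDx⟩ := (hU t htn).2
        obtain ⟨Dy, hDy⟩ := (hV (K t) (q - K t) (by omega)).2
        refine ⟨max Dx Dy, ?_⟩
        rintro A ⟨t', htn', h1', h2', U, hUm, V, hVm, rfl⟩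
        have hte : t = t' := huniq q t t' h1 h2 h1' h2'
        subst hte
        rintro ⟨a, b⟩ ⟨ha, hb⟩ ⟨a', b'⟩ ⟨ha', hb'⟩
        show dist (a, b) (a', b') ≤ max Dx Dy
        rw [Prod.dist_eq]
        exact max_le_max (hDx U hUm a ha a' ha') (hDy V hVm b hb b' hb')
  · -- coverage
    intro p
    obtain ⟨A, hA, hpA⟩ := hUcov p.1
    rw [Set.mem_iUnion₂] at hA
    obtain ⟨t, htn, hAU⟩ := hA
    obtain ⟨B, hB, hpB⟩ := hVcov (K t) p.2
    rw [Set.mem_iUnion₂] at hB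
    obtain ⟨j, hj, hBV⟩ := hB
    have hidx : K t + j ≤ K (n + 1) - 1 := by
      have h1 : K t + m (K t) + 1 ≤ K (n + 1) := by
        rw [← hKsucc]; exact hKmono (Nat.succ_le_succ htn)
      omega
    refine ⟨A ×ˢ B, Set.mem_iUnion₂.mpr ⟨K t + j, hidx, ?_⟩, hpA, hpB⟩
    exact ⟨t, htn, by omega, by omega, A, hAU,
      B, by rw [show K t + j - K t = j by omega]; exact hBV, rfl⟩
end
end

section
/- Let T be a tree with root e, viewed as a metric space on its vertex set with the shortest path metric. For any R > 0, any R-disjoint family V of annuli [a,b) = {v ∈ T : a ≤ d(v,e) < b} with uniformly bounded width b−a admits a refinement into a uniformly bounded R-disjoint family of subsets covering the same union. -/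
open scoped ENNReal
open Filter Set

noncomputable section

section TreeAux

variable {V : Type*} {G : SimpleGraph V}

lemma aux_dist_getVert_le (hc : G.Connected) {u v : V} (p : G.Walk u v) (i k : ℕ) :
    G.dist (p.getVert i) (p.getVert (i + k)) ≤ k := by
  induction k with
  | zero => simp [SimpleGraph.dist_self]
  | succ k ih =>
    have h1 : G.dist (p.getVert (i + k)) (p.getVert (i + k + 1)) ≤ 1 := by
      by_cases h : i + k < p.length
      · exact SimpleGraph.dist_le (p.adj_getVert_succ h).toWalk
      · rw [p.getVert_of_length_le (by omega), p.getVert_of_length_le (by omega)]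
        simp [SimpleGraph.dist_self]
    have h2 := hc.dist_triangle (u := p.getVert i) (v := p.getVert (i + k))
      (w := p.getVert (i + k + 1))
    have : i + (k + 1) = i + k + 1 := by omega
    rw [this]
    omega

lemma aux_geodesic_getVert (hc : G.Connected) {e u : V} (p : G.Walk e u)
    (hp : p.length = G.dist e u) {i : ℕ} (hi : i ≤ p.length) :
    G.dist e (p.getVert i) = i ∧ G.dist (p.getVert i) u = p.length - i := by
  have h1 := aux_dist_getVert_le hc p 0 i
  rw [p.getVert_zero] at h1
  have h2 := aux_dist_getVert_le hc p i (p.length - i)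
  rw [show i + (p.length - i) = p.length by omega, p.getVert_length] at h2
  have h3 := hc.dist_triangle (u := e) (v := p.getVert i) (w := u)
  simp only [Nat.zero_add] at h1
  omega

lemma aux_exists_level (hc : G.Connected) {e u : V} {k : ℕ} (hk : k ≤ G.dist e u) :
    ∃ x : V, G.dist e x = k ∧ G.dist e x + G.dist x u = G.dist e u := by
  obtain ⟨p, hp, hlen⟩ := hc.exists_path_of_dist e u
  obtain ⟨h1, h2⟩ := aux_geodesic_getVert hc p hlen (i := k) (by omega)
  exact ⟨p.getVert k, h1, by omega⟩

lemma aux_mem_support_dist [DecidableEq V] {e a : V} (p : G.Walk e a) {b : V} (hb : b ∈ p.support) :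
    G.dist e b ≤ p.length := by
  have h1 := SimpleGraph.dist_le (p.takeUntil b hb)
  have h2 := p.length_takeUntil_le hb
  omega

lemma aux_level_adj (hG : G.IsTree) (e : V) {a b : V} (hab : G.Adj a b) :
    G.dist e b = G.dist e a + 1 ∨ G.dist e a = G.dist e b + 1 := by
  have hc := hG.isConnected
  haveI := Classical.decEq V
  have hd1 : G.dist a b ≤ 1 := SimpleGraph.dist_le hab.toWalk
  have ht1 := hc.dist_triangle (u := e) (v := a) (w := b)
  have ht2 := hc.dist_triangle (u := e) (v := b) (w := a)
  have hcomm : G.dist b a = G.dist a b := SimpleGraph.dist_comm ..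
  have hne : G.dist e a ≠ G.dist e b := by
    intro heq
    obtain ⟨p, hp, hlen⟩ := hc.exists_path_of_dist e a
    have hbs : b ∉ p.support := by
      intro hbs
      have := aux_mem_support_dist p hbs
      have h2 := SimpleGraph.dist_le (p.dropUntil b hbs)
      have h3 : (p.takeUntil b hbs).length + (p.dropUntil b hbs).length = p.length := by
        have := congr_arg SimpleGraph.Walk.length (p.take_spec hbs)
        rwa [SimpleGraph.Walk.length_append] at this
      have h4 := aux_mem_support_dist p hbs
      have hba : G.dist b a = 0 := by
        have h5 := SimpleGraph.dist_le (p.takeUntil b hbs)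
        omega
      have : b = a := (hc.dist_eq_zero_iff).mp hba
      exact G.irrefl (this ▸ hab)
    -- two distinct paths from b to e
    obtain ⟨q, hq, hqlen⟩ := hc.exists_path_of_dist e b
    have hpath1 : (SimpleGraph.Walk.cons hab.symm p.reverse).IsPath := by
      refine hp.reverse.cons ?_
      rwa [SimpleGraph.Walk.support_reverse, List.mem_reverse]
    have := (hG.existsUnique_path b e).unique hpath1 hq.reverse
    have hlencontra := congrArg SimpleGraph.Walk.length this
    simp [SimpleGraph.Walk.length_reverse] at hlencontra
    omega
  omega

lemma aux_parent_unique (hG : G.IsTree) (e : V) {a b u : V} (ha : G.Adj a u) (hb : G.Adj b u)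
    (hla : G.dist e a + 1 = G.dist e u) (hlb : G.dist e b + 1 = G.dist e u) : a = b := by
  haveI := Classical.decEq V
  have hc := hG.isConnected
  obtain ⟨p, hp, hplen⟩ := hc.exists_path_of_dist e a
  obtain ⟨q, hq, hqlen⟩ := hc.exists_path_of_dist e b
  have hup : u ∉ p.support := by
    intro h
    have := aux_mem_support_dist p h
    omega
  have huq : u ∉ q.support := by
    intro h
    have := aux_mem_support_dist q h
    omega
  have hpath1 : (SimpleGraph.Walk.cons ha.symm p.reverse).IsPath := by
    refine hp.reverse.cons ?_
    rwa [SimpleGraph.Walk.support_reverse, List.mem_reverse]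
  have hpath2 : (SimpleGraph.Walk.cons hb.symm q.reverse).IsPath := by
    refine hq.reverse.cons ?_
    rwa [SimpleGraph.Walk.support_reverse, List.mem_reverse]
  have := (hG.existsUnique_path u e).unique hpath1 hpath2
  have := congrArg (fun w : G.Walk u e => w.getVert 1) this
  simpa [SimpleGraph.Walk.getVert_cons_succ] using this

end TreeAux

section TreeAux2

variable {V : Type*} {G : SimpleGraph V}

/-- transitivity of "on geodesic from e" -/
lemma aux_onGeo_trans (hc : G.Connected) {e x c u : V}
    (h1 : G.dist e x + G.dist x c = G.dist e c)
    (h2 : G.dist e c + G.dist c u = G.dist e u) :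
    G.dist e x + G.dist x u = G.dist e u := by
  have t1 := hc.dist_triangle (u := x) (v := c) (w := u)
  have t2 := hc.dist_triangle (u := e) (v := x) (w := u)
  omega

/-- uniqueness of the level-`k` vertex on the geodesic from `e` to `u` -/
lemma aux_onGeo_unique (hG : G.IsTree) (e : V) :
    ∀ (t : ℕ) (u x x' : V), G.dist x u = t →
      G.dist e x + G.dist x u = G.dist e u →
      G.dist e x' + G.dist x' u = G.dist e u →
      G.dist e x = G.dist e x' → x = x' := by
  have hc := hG.isConnected
  intro t
  induction t with
  | zero =>
    intro u x x' ht h1 h2 hl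
    have hx : x = u := hc.dist_eq_zero_iff.mp ht
    have hx' : x' = u := hc.dist_eq_zero_iff.mp (by omega)
    rw [hx, hx']
  | succ t ih =>
    intro u x x' ht h1 h2 hl
    have ht' : G.dist x' u = t + 1 := by omega
    -- construct the parent of u on the geodesic from x
    have key : ∀ y : V, G.dist y u = t + 1 → G.dist e y + G.dist y u = G.dist e u →
        ∃ z : V, G.Adj z u ∧ G.dist e z + 1 = G.dist e u ∧
          G.dist y z = t ∧ G.dist e y + G.dist y z = G.dist e z := by
      intro y hy hgy
      obtain ⟨s, _, hslen⟩ := hc.exists_path_of_dist y u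
      refine ⟨s.getVert t, ?_, ?_, ?_, ?_⟩ <;>
        [skip; skip; skip; skip]
      case _ =>
        have := s.adj_getVert_succ (i := t) (by omega)
        rw [show t + 1 = s.length by omega] at this
        rwa [s.getVert_length] at this
      all_goals {
        obtain ⟨hz1, hz2⟩ := aux_geodesic_getVert hc s hslen (i := t) (by omega)
        have hadj : G.Adj (s.getVert t) u := by
          have := s.adj_getVert_succ (i := t) (by omega)
          rw [show t + 1 = s.length by omega] at this
          rwa [s.getVert_length] at this
        have hd1 : G.dist (s.getVert t) u ≤ 1 := SimpleGraph.dist_le hadj.toWalk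
        have t1 := hc.dist_triangle (u := e) (v := s.getVert t) (w := u)
        have t2 := hc.dist_triangle (u := e) (v := y) (w := s.getVert t)
        have t3 := hc.dist_triangle (u := y) (v := s.getVert t) (w := u)
        have hyz := aux_dist_getVert_le hc s 0 t
        rw [s.getVert_zero] at hyz
        simp only [Nat.zero_add] at hyz
        omega
      }
    obtain ⟨z, hz1, hz2, hz3, hz4⟩ := key x ht h1
    obtain ⟨z', hz1', hz2', hz3', hz4'⟩ := key x' ht' h2
    have hzz : z = z' := aux_parent_unique hG e hz1 hz1' hz2 hz2'
    rw [hzz] at hz3 hz4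
    exact ih z' x x' hz3 hz4 (by omega) hl

/-- comparability of two vertices on a common geodesic -/
lemma aux_onGeo_compare (hG : G.IsTree) {e c z v : V}
    (h1 : G.dist e c + G.dist c v = G.dist e v)
    (h2 : G.dist e z + G.dist z v = G.dist e v)
    (hle : G.dist e c ≤ G.dist e z) :
    G.dist e c + G.dist c z = G.dist e z := by
  have hc := hG.isConnected
  obtain ⟨p, _, hplen⟩ := hc.exists_path_of_dist e v
  have hcv : G.dist e c ≤ p.length := by omega
  have hzv : G.dist e z ≤ p.length := by omega
  obtain ⟨hg1, hg2⟩ := aux_geodesic_getVert hc p hplen hcv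
  obtain ⟨hg1', hg2'⟩ := aux_geodesic_getVert hc p hplen hzv
  have hcc : c = p.getVert (G.dist e c) :=
    aux_onGeo_unique hG e (G.dist c v) v c _ rfl h1 (by omega) (by omega)
  have hzz : z = p.getVert (G.dist e z) :=
    aux_onGeo_unique hG e (G.dist z v) v z _ rfl h2 (by omega) (by omega)
  have hd := aux_dist_getVert_le hc p (G.dist e c) (G.dist e z - G.dist e c)
  rw [show G.dist e c + (G.dist e z - G.dist e c) = G.dist e z by omega] at hd
  rw [← hcc, ← hzz] at hd
  have t1 := hc.dist_triangle (u := e) (v := c) (w := z)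
  omega

/-- existence of the meet of two vertices -/
lemma aux_meet (hG : G.IsTree) (e : V) :
    ∀ (t : ℕ) (u u' : V), G.dist u u' = t →
      ∃ c : V, (G.dist e c + G.dist c u = G.dist e u) ∧
        (G.dist e c + G.dist c u' = G.dist e u') ∧
        G.dist u c + G.dist c u' = G.dist u u' := by
  have hc := hG.isConnected
  intro t
  induction t with
  | zero =>
    intro u u' ht
    have : u = u' := hc.dist_eq_zero_iff.mp ht
    subst this
    exact ⟨u, by simp [SimpleGraph.dist_self], by simp [SimpleGraph.dist_self],
      by simp [SimpleGraph.dist_self]⟩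
  | succ t ih =>
    intro u u' ht
    obtain ⟨r, _, hrlen⟩ := hc.exists_path_of_dist u u'
    obtain ⟨hg1, hg2⟩ := aux_geodesic_getVert hc r hrlen (i := t) (by omega)
    set v := r.getVert t with hv
    have hadj : G.Adj v u' := by
      have := r.adj_getVert_succ (i := t) (by omega)
      rw [show t + 1 = r.length by omega] at this
      rw [r.getVert_length] at this
      rwa [hv]
    have hduv : G.dist u v = t := by
      have h1 := aux_dist_getVert_le hc r 0 t
      rw [r.getVert_zero] at h1
      simp only [Nat.zero_add] at h1
      rw [← hv] at h1
      have h2 := hc.dist_triangle (u := u) (v := v) (w := u')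
      have h3 : G.dist v u' ≤ 1 := SimpleGraph.dist_le hadj.toWalk
      omega
    have hvu' : G.dist v u' = 1 := by
      have h3 : G.dist v u' ≤ 1 := SimpleGraph.dist_le hadj.toWalk
      have hvne : v ≠ u' := by
        intro h
        rw [h] at hduv
        omega
      have h0 : G.dist v u' ≠ 0 := fun h0 => hvne (hc.dist_eq_zero_iff.mp h0)
      omega
    obtain ⟨c, hc1, hc2, hc3⟩ := ih u v hduv
    rcases aux_level_adj hG e hadj with hA | hB
    · -- level of u' is level of v plus 1
      refine ⟨c, hc1, ?_, ?_⟩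
      · exact aux_onGeo_trans hc hc2 (by omega)
      · have t1 := hc.dist_triangle (u := u) (v := c) (w := u')
        have t2 := hc.dist_triangle (u := c) (v := v) (w := u')
        omega
    · -- level of v is level of u' plus 1
      by_cases hcv : c = v
      · refine ⟨u', ?_, by simp [SimpleGraph.dist_self], by simp [SimpleGraph.dist_self]⟩
        rw [hcv] at hc1
        have d1 : G.dist u' u = t + 1 := by rw [SimpleGraph.dist_comm]; omega
        have d2 : G.dist v u = t := by rw [SimpleGraph.dist_comm]; omega
        omega
      · exfalso
        have hgu'v : G.dist e u' + G.dist u' v = G.dist e v := by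
          rw [SimpleGraph.dist_comm (u := u') (v := v)]; omega
        have hcvpos : 1 ≤ G.dist c v := by
          have h0 : G.dist c v ≠ 0 := fun h0 => hcv (hc.dist_eq_zero_iff.mp h0)
          omega
        have hle : G.dist e c ≤ G.dist e u' := by omega
        have hco := aux_onGeo_compare hG hc2 hgu'v hle
        have t1 := hc.dist_triangle (u := u) (v := c) (w := u')
        have hcomm1 : G.dist u c = G.dist c u := SimpleGraph.dist_comm ..
        omega

/-- branching estimate: distinct vertices at the same level on two geodesics -/
lemma aux_branch (hG : G.IsTree) (e : V) {x x' u u' : V} {k : ℕ}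
    (hx : G.dist e x = k) (hx' : G.dist e x' = k) (hne : x ≠ x')
    (h1 : G.dist e x + G.dist x u = G.dist e u)
    (h2 : G.dist e x' + G.dist x' u' = G.dist e u') :
    G.dist e u + G.dist e u' + 2 ≤ G.dist u u' + 2 * k := by
  have hc := hG.isConnected
  by_contra hcon
  obtain ⟨c, hc1, hc2, hc3⟩ := aux_meet hG e (G.dist u u') u u' rfl
  have hcomm : G.dist u c = G.dist c u := SimpleGraph.dist_comm ..
  have hkc : k ≤ G.dist e c := by omega
  obtain ⟨z, hz1, hz2⟩ := aux_exists_level hc (e := e) (u := c) hkc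
  have hzu : G.dist e z + G.dist z u = G.dist e u := aux_onGeo_trans hc hz2 hc1
  have hzu' : G.dist e z + G.dist z u' = G.dist e u' := aux_onGeo_trans hc hz2 hc2
  have e1 : x = z := aux_onGeo_unique hG e (G.dist x u) u x z rfl h1 hzu (by omega)
  have e2 : x' = z := aux_onGeo_unique hG e (G.dist x' u') u' x' z rfl h2 hzu' (by omega)
  exact hne (e1.trans e2.symm)

end TreeAux2

lemma aux_le_setDistD {α : Type*} (d : α → α → ℝ) {A B : Set α} {r : ℝ}
    (h : ∀ a ∈ A, ∀ b ∈ B, r ≤ d a b) : ENNReal.ofReal r ≤ setDistD d A B := by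
  refine le_iInf fun a => le_iInf fun ha => le_iInf fun b => le_iInf fun hb => ?_
  exact ENNReal.ofReal_le_ofReal (h a ha b hb)

lemma aux_setDistD_anti {α : Type*} (d : α → α → ℝ) {A A' B B' : Set α}
    (hA : A' ⊆ A) (hB : B' ⊆ B) : setDistD d A B ≤ setDistD d A' B' := by
  refine le_iInf fun a => le_iInf fun ha => le_iInf fun b => le_iInf fun hb => ?_
  exact le_trans (iInf₂_le a (hA ha)) (iInf₂_le b (hB hb))

/-- in a tree, any `R`-disjoint family of annuli of uniformly
bounded width admits a uniformly bounded `R`-disjoint refinement covering the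
same union. -/
theorem tree_annuli_refinement {V : Type*} (G : SimpleGraph V) (hG : G.IsTree)
    (e : V) (R : ℝ) (hR : 0 < R) (w : ℝ) (𝒱 : Set (Set V))
    (hann : ∀ A ∈ 𝒱, ∃ m n : ℕ, (n : ℝ) ≤ m + w ∧
      A = {v : V | (m : ℝ) ≤ gdist G e v ∧ gdist G e v < n})
    (hdisj : RDisjointD (gdist G) R 𝒱) :
    ∃ 𝒱' : Set (Set V),
      (∀ B ∈ 𝒱', ∃ A ∈ 𝒱, B ⊆ A) ∧
      RDisjointD (gdist G) R 𝒱' ∧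
      UBoundedD (gdist G) 𝒱' ∧
      ⋃₀ 𝒱' = ⋃₀ 𝒱 := by
  classical
  have hc : G.Connected := hG.isConnected
  choose! m n hw hA using hann
  set K : ℕ := ⌈R / 2⌉₊ with hKdef
  have hRK : R ≤ 2 * (K : ℝ) := by
    have h1 : R / 2 ≤ (K : ℝ) := Nat.le_ceil (R / 2)
    linarith
  -- the refinement: cones over level `m A - K` vertices
  refine ⟨{B | ∃ A ∈ 𝒱, ∃ x : V, G.dist e x = m A - K ∧
      B = {v | v ∈ A ∧ G.dist e x + G.dist x v = G.dist e v}}, ?_, ?_, ?_, ?_⟩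
  · rintro B ⟨A, hA𝒱, x, hx, rfl⟩
    exact ⟨A, hA𝒱, fun v hv => hv.1⟩
  · -- R-disjointness
    rintro B ⟨A, hA𝒱, x, hx, rfl⟩ B' ⟨A', hA'𝒱, x', hx', rfl⟩ hne
    by_cases hAA : A = A'
    · subst hAA
      have hxx : x ≠ x' := by
        rintro rfl
        exact hne rfl
      have hq : 1 ≤ m A - K := by
        by_contra h
        have h0 : m A - K = 0 := by omega
        have hxe : e = x := hc.dist_eq_zero_iff.mp (by omega)
        have hxe' : e = x' := hc.dist_eq_zero_iff.mp (by omega)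
        exact hxx (hxe ▸ hxe')
      have key : ∀ u ∈ {v | v ∈ A ∧ G.dist e x + G.dist x v = G.dist e v},
          ∀ u' ∈ {v | v ∈ A ∧ G.dist e x' + G.dist x' v = G.dist e v},
          (2 * (K : ℝ) + 2) ≤ gdist G u u' := by
        rintro u ⟨huA, hugeo⟩ u' ⟨hu'A, hu'geo⟩
        have huA2 := huA
        have hu'A2 := hu'A
        rw [hA A hA𝒱, Set.mem_setOf_eq] at huA2 hu'A2
        simp only [gdist] at huA2 hu'A2 ⊢
        have hmu : m A ≤ G.dist e u := by exact_mod_cast huA2.1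
        have hmu' : m A ≤ G.dist e u' := by exact_mod_cast hu'A2.1
        have hbr := aux_branch hG e hx hx' hxx hugeo hu'geo
        have : 2 * K + 2 ≤ G.dist u u' := by omega
        exact_mod_cast this
      calc ENNReal.ofReal R < ENNReal.ofReal (2 * (K : ℝ) + 2) := by
            rw [ENNReal.ofReal_lt_ofReal_iff (by positivity)]
            linarith
        _ ≤ _ := aux_le_setDistD _ key
    · calc ENNReal.ofReal R < setDistD (gdist G) A A' := hdisj A hA𝒱 A' hA'𝒱 hAA
        _ ≤ _ := aux_setDistD_anti _ (fun v hv => hv.1) (fun v hv => hv.1)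
  · -- uniform boundedness
    refine ⟨2 * (K : ℝ) + 2 * w, ?_⟩
    rintro B ⟨A, hA𝒱, x, hx, rfl⟩ u ⟨huA, hugeo⟩ u' ⟨hu'A, hu'geo⟩
    rw [hA A hA𝒱, Set.mem_setOf_eq] at huA hu'A
    simp only [gdist] at huA hu'A ⊢
    have hnu : G.dist e u + 1 ≤ n A := by
      have := huA.2
      exact_mod_cast this
    have hnu' : G.dist e u' + 1 ≤ n A := by
      have := hu'A.2
      exact_mod_cast this
    have htri := hc.dist_triangle (u := u) (v := x) (w := u')
    have hcomm : G.dist u x = G.dist x u := SimpleGraph.dist_comm ..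
    have h1 : G.dist u u' + 2 * (m A - K) ≤ G.dist e u + G.dist e u' := by omega
    have h2 : m A ≤ (m A - K) + K := by omega
    have h1' : (G.dist u u' : ℝ) + 2 * ((m A - K : ℕ) : ℝ) ≤ G.dist e u + G.dist e u' := by
      exact_mod_cast h1
    have h2' : (m A : ℝ) ≤ ((m A - K : ℕ) : ℝ) + K := by exact_mod_cast h2
    have hnu2 : (G.dist e u : ℝ) + 1 ≤ n A := by exact_mod_cast hnu
    have hnu2' : (G.dist e u' : ℝ) + 1 ≤ n A := by exact_mod_cast hnu'
    have hwA := hw A hA𝒱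
    linarith
  · -- same union
    ext v
    simp only [Set.mem_sUnion, Set.mem_setOf_eq]
    constructor
    · rintro ⟨B, ⟨A, hA𝒱, x, hx, rfl⟩, hv⟩
      exact ⟨A, hA𝒱, hv.1⟩
    · rintro ⟨A, hA𝒱, hv⟩
      have hv2 := hv
      rw [hA A hA𝒱, Set.mem_setOf_eq] at hv2
      simp only [gdist] at hv2
      have hmv : m A ≤ G.dist e v := by exact_mod_cast hv2.1
      obtain ⟨x, hx1, hx2⟩ := aux_exists_level hc (e := e) (u := v)
        (k := m A - K) (by omega)
      exact ⟨_, ⟨A, hA𝒱, x, hx1, rfl⟩, hv, hx2⟩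
end
end

section
/- Let T be a tree with root e and let R > 0. Fix an annulus I = [a,b) with a > R. Define x E y for x, y ∈ I iff the Gromov product (x|y)_e ≥ a − R. Then E is an equivalence relation on I, any two E-related points satisfy d(x,y) < 2(b−a) + 2R, and any two non-E-related points satisfy d(x,y) > 2R. -/
open scoped ENNReal
open Filter Set

noncomputable section

section TreeHelpers
variable {V : Type*} {G : SimpleGraph V}

lemma tree_path_length (hG : G.IsTree) {u v : V} (p : G.Walk u v) (hp : p.IsPath) :
    p.length = G.dist u v := by
  obtain ⟨q, hq, hq'⟩ := hG.isConnected.exists_path_of_dist u v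
  rw [(hG.existsUnique_path u v).unique hp hq, hq']

lemma tree_dist_split (hG : G.IsTree) {u w : V} (p : G.Walk u w) (hp : p.IsPath)
    {v : V} (hv : v ∈ p.support) [DecidableEq V] :
    G.dist u v + G.dist v w = G.dist u w := by
  rw [← tree_path_length hG p hp, ← tree_path_length hG _ (hp.takeUntil hv),
    ← tree_path_length hG _ (hp.dropUntil hv), ← SimpleGraph.Walk.length_append,
    SimpleGraph.Walk.take_spec]

lemma isPath_append [DecidableEq V] {u v w : V} {p : G.Walk u v} {q : G.Walk v w}
    (hp : p.IsPath) (hq : q.IsPath)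
    (hd : ∀ a ∈ p.support, a ∈ q.support → a = v) : (p.append q).IsPath := by
  rw [SimpleGraph.Walk.isPath_def, SimpleGraph.Walk.support_append]
  refine List.Nodup.append hp.support_nodup ?_ ?_
  · have := hq.support_nodup
    rw [q.support_eq_cons] at this
    exact this.of_cons
  · intro a ha ha'
    have h1 : a ∈ q.support := by
      rw [q.support_eq_cons]; exact List.mem_cons_of_mem _ ha'
    have := hd a ha h1
    subst this
    have := hq.support_nodup
    rw [q.support_eq_cons, List.nodup_cons] at this
    exact this.1 ha'

lemma exists_first [DecidableEq V] {u x : V} (q : G.Walk u x) (S : Set V) (hx : x ∈ S) :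
    ∃ (v : V) (hv : v ∈ q.support), v ∈ S ∧
      ∀ w ∈ (q.takeUntil v hv).support, w ∈ S → w = v := by
  revert hx
  induction q with
  | nil =>
    intro hx
    refine ⟨_, by simp, hx, fun w hw _ => ?_⟩
    have h2 := SimpleGraph.Walk.support_takeUntil_subset _ _ hw
    simpa using h2
  | cons r p ih =>
    intro hx
    rename_i a c d
    by_cases hu : a ∈ S
    · refine ⟨a, by simp, hu, fun w hw _ => ?_⟩
      have : (SimpleGraph.Walk.cons r p).takeUntil a (by simp) = SimpleGraph.Walk.nil := by
        simp [SimpleGraph.Walk.takeUntil]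
      rw [this] at hw
      simpa using hw
    · obtain ⟨v, hv, hvS, hfirst⟩ := ih hx
      have hv' : v ∈ (SimpleGraph.Walk.cons r p).support := by
        simp [SimpleGraph.Walk.support_cons]; right; exact hv
      refine ⟨v, hv', hvS, fun w hw hwS => ?_⟩
      have hav : a ≠ v := fun h => hu (h ▸ hvS)
      have : (SimpleGraph.Walk.cons r p).takeUntil v hv' =
          SimpleGraph.Walk.cons r (p.takeUntil v hv) := by
        simp [SimpleGraph.Walk.takeUntil, hav]
      rw [this] at hw
      rw [SimpleGraph.Walk.support_cons] at hw
      rcases List.mem_cons.mp hw with h | h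
      · exact absurd (h ▸ hwS) hu
      · exact hfirst w h hwS

lemma tree_median (hG : G.IsTree) [DecidableEq V] (e : V) {x y : V} {p : G.Walk x y}
    (hp : p.IsPath) :
    ∃ v ∈ p.support, G.dist e v + G.dist v x = G.dist e x ∧
      G.dist e v + G.dist v y = G.dist e y := by
  obtain ⟨q, hq, _⟩ := hG.isConnected.exists_path_of_dist e x
  obtain ⟨v, hvq, hvp, hfirst⟩ := exists_first q {w | w ∈ p.support} (by simp)
  refine ⟨v, hvp, tree_dist_split hG q hq hvq, ?_⟩
  have hW : ((q.takeUntil v hvq).append (p.dropUntil v hvp)).IsPath := by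
    refine isPath_append (hq.takeUntil hvq) (hp.dropUntil hvp) fun a ha ha' => ?_
    exact hfirst a ha (SimpleGraph.Walk.support_dropUntil_subset _ _ ha')
  have := tree_path_length hG _ hW
  rw [SimpleGraph.Walk.length_append] at this
  rw [← this, tree_path_length hG _ (hq.takeUntil hvq),
    tree_path_length hG _ (hp.dropUntil hvp)]

lemma tree_four (hG : G.IsTree) (e x y z : V) :
    G.dist x z + G.dist y e ≤ max (G.dist x y + G.dist z e) (G.dist y z + G.dist x e) := by
  classical
  obtain ⟨pxz, hpxz, _⟩ := hG.isConnected.exists_path_of_dist x z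
  obtain ⟨v, hv, hvx, hvz⟩ := tree_median hG e hpxz
  obtain ⟨pxy, hpxy, _⟩ := hG.isConnected.exists_path_of_dist x y
  obtain ⟨pyz, hpyz, _⟩ := hG.isConnected.exists_path_of_dist y z
  have hxz : G.dist x v + G.dist v z = G.dist x z := tree_dist_split hG pxz hpxz hv
  have hsub : v ∈ pxy.support ∨ v ∈ pyz.support := by
    have heq : pxz = (pxy.append pyz).bypass :=
      (hG.existsUnique_path x z).unique hpxz (SimpleGraph.Walk.bypass_isPath _)
    have := SimpleGraph.Walk.support_bypass_subset _ (heq ▸ hv)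
    rwa [SimpleGraph.Walk.mem_support_append_iff] at this
  have tri1 : G.dist e y ≤ G.dist e v + G.dist v y := hG.isConnected.dist_triangle
  have cey : G.dist e y = G.dist y e := SimpleGraph.dist_comm
  have cez : G.dist e z = G.dist z e := SimpleGraph.dist_comm
  have cex : G.dist e x = G.dist x e := SimpleGraph.dist_comm
  have cxv : G.dist x v = G.dist v x := SimpleGraph.dist_comm
  have cyv : G.dist y v = G.dist v y := SimpleGraph.dist_comm
  rcases hsub with h | h
  · have hs : G.dist x v + G.dist v y = G.dist x y := tree_dist_split hG pxy hpxy h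
    refine le_max_of_le_left ?_
    omega
  · have hs : G.dist y v + G.dist v z = G.dist y z := tree_dist_split hG pyz hpyz h
    refine le_max_of_le_right ?_
    omega

end TreeHelpers

/-- on the annulus `I = [a, b)` of a rooted tree with `a > R`,
the relation `x E y ⟺ (x|y)_e ≥ a - R` (Gromov product at the root) is an
equivalence relation; `E`-related points are at distance `< 2(b-a) + 2R` and
non-`E`-related points are at distance `> 2R`. -/
theorem tree_annulus_gromov_relation {V : Type*} (G : SimpleGraph V)
    (hG : G.IsTree) (e : V) (R a b : ℝ) (hR : 0 < R) (ha : R < a) (hab : a < b)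
    (I : Set V) (hI : I = {v : V | a ≤ gdist G e v ∧ gdist G e v < b})
    (E : V → V → Prop)
    (hE : ∀ x y, E x y ↔
      a - R ≤ (gdist G x e + gdist G y e - gdist G x y) / 2) :
    (∀ x ∈ I, E x x) ∧
    (∀ x ∈ I, ∀ y ∈ I, E x y → E y x) ∧
    (∀ x ∈ I, ∀ y ∈ I, ∀ z ∈ I, E x y → E y z → E x z) ∧
    (∀ x ∈ I, ∀ y ∈ I, E x y → gdist G x y < 2 * (b - a) + 2 * R) ∧
    (∀ x ∈ I, ∀ y ∈ I, ¬ E x y → 2 * R < gdist G x y) := by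
  subst hI
  have hcomm : ∀ x y : V, gdist G x y = gdist G y x := by
    intro x y; simp [gdist, SimpleGraph.dist_comm]
  have hself : ∀ x : V, gdist G x x = 0 := by intro x; simp [gdist]
  refine ⟨?_, ?_, ?_, ?_, ?_⟩
  · intro x hx
    rw [hE]
    rw [hself, hcomm x e]
    have := hx.1
    linarith
  · intro x _ y _ h
    rw [hE] at h ⊢
    rw [hcomm y x]
    linarith [hcomm x y] -- just reorder
  · intro x _ y _ z _ hxy hyz
    rw [hE] at hxy hyz ⊢
    rcases le_max_iff.mp (tree_four hG e x y z) with h | h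
    · have h' : gdist G x z + gdist G y e ≤ gdist G x y + gdist G z e := by
        unfold gdist; exact_mod_cast h
      linarith
    · have h' : gdist G x z + gdist G y e ≤ gdist G y z + gdist G x e := by
        unfold gdist; exact_mod_cast h
      linarith
  · intro x hx y hy h
    rw [hE] at h
    have h1 : gdist G x e < b := by rw [← hcomm e x]; exact hx.2
    have h2 : gdist G y e < b := by rw [← hcomm e y]; exact hy.2
    linarith
  · intro x hx y hy h
    rw [hE] at h
    push_neg at h
    have h1 : a ≤ gdist G x e := by rw [← hcomm e x]; exact hx.1
    have h2 : a ≤ gdist G y e := by rw [← hcomm e y]; exact hy.1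
    linarith
end
end

section
/- If {X_α : α ∈ A} is a family of metric spaces with finite asymptotic dimension uniformly (i.e., asdim {X_α} ≤ n for some n), then the family {X_α} has straight finite decomposition complexity. -/
open scoped ENNReal
open Filter Set

noncomputable section

/-- `R`-disjointness is antitone in `R`. -/
lemma rdisjoint_mono {α : Type*} {d : α → α → ℝ} {r R : ℝ} (hrR : r ≤ R)
    {𝒰 : Set (Set α)} (h : RDisjointD d R 𝒰) : RDisjointD d r 𝒰 := by
  intro A hA B hB hne
  exact lt_of_le_of_lt (ENNReal.ofReal_le_ofReal hrR) (h A hA B hB hne)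

lemma rdisjoint_singleton {α : Type*} (d : α → α → ℝ) (R : ℝ) (A : Set α) :
    RDisjointD d R {A} := by
  intro B hB C hC hne
  rw [Set.mem_singleton_iff] at hB hC
  exact absurd (hB.trans hC.symm) hne

lemma rdisjoint_empty {α : Type*} (d : α → α → ℝ) (R : ℝ) :
    RDisjointD d R (∅ : Set (Set α)) := by
  intro B hB; exact absurd hB (Set.notMem_empty B)


/-- a family of metric spaces with finite asymptotic dimension
uniformly has straight finite decomposition complexity. -/
theorem asdim_fam_sfdc {α : Type*} [MetricSpace α] (𝒳 : Set (Set α)) (n : ℕ)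
    (h : AsdimFamLE (fun x y : α => dist x y) 𝒳 n) :
    SFDCD (fun x y : α => dist x y) 𝒳 := by
  intro R hRpos hRmono
  obtain ⟨D, hD0, hfam⟩ := h (R n) (hRpos n)
  choose 𝒰 hU hcov using hfam
  -- remainder set after stage `i`
  set rem : ∀ X, X ∈ 𝒳 → ℕ → Set α := fun X hX i =>
    {x | x ∈ X ∧ ∃ j : Fin (n + 1), i < (j : ℕ) ∧ ∃ A ∈ 𝒰 X hX j, x ∈ A}
    with hrem
  set 𝒱 : ℕ → Set (Set α) := fun i =>
    {A | ∃ X, ∃ hX : X ∈ 𝒳,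
      (∃ j : Fin (n + 1), (j : ℕ) ≤ i ∧ A ∈ 𝒰 X hX j) ∨ A = rem X hX i}
    with h𝒱
  refine ⟨n, 𝒱, ?_, ?_, ?_⟩
  · -- initial decomposition
    intro X hX
    refine ⟨𝒰 X hX 0, {rem X hX 0}, ?_, ?_, ?_, ?_⟩
    · exact rdisjoint_mono (hRmono (Nat.zero_le n)) (hU X hX 0).1
    · exact rdisjoint_singleton _ _ _
    · rintro A (hA | hA)
      · exact ⟨X, hX, Or.inl ⟨0, le_rfl, hA⟩⟩
      · exact ⟨X, hX, Or.inr hA⟩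
    · intro x hx
      obtain ⟨i, A, hA, hxA⟩ := hcov X hX x hx
      rcases Nat.eq_zero_or_pos (i : ℕ) with hi0 | hipos
      · have : i = 0 := Fin.ext hi0
        exact ⟨A, Or.inl (this ▸ hA), hxA⟩
      · exact ⟨rem X hX 0, Or.inr rfl, hx, i, hipos, A, hA, hxA⟩
  · -- the chain of decompositions
    intro i hi Y hY
    obtain ⟨X, hX, hcase⟩ := hY
    rcases hcase with ⟨j, hj, hYj⟩ | hYrem
    · -- a bounded piece: trivial decomposition
      refine ⟨{Y}, ∅, rdisjoint_singleton _ _ _, rdisjoint_empty _ _, ?_, ?_⟩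
      · rintro A (hA | hA)
        · rw [Set.mem_singleton_iff] at hA
          exact ⟨X, hX, Or.inl ⟨j, hj.trans (Nat.le_succ i), hA ▸ hYj⟩⟩
        · exact absurd hA (Set.notMem_empty A)
      · intro x hx
        exact ⟨Y, Or.inl rfl, hx⟩
    · -- the remainder: peel off family `i + 1`
      have hi1 : i + 1 < n + 1 := by omega
      refine ⟨𝒰 X hX ⟨i + 1, hi1⟩, {rem X hX (i + 1)}, ?_, ?_, ?_, ?_⟩
      · exact rdisjoint_mono (hRmono (by omega)) (hU X hX ⟨i + 1, hi1⟩).1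
      · exact rdisjoint_singleton _ _ _
      · rintro A (hA | hA)
        · exact ⟨X, hX, Or.inl ⟨⟨i + 1, hi1⟩, le_rfl, hA⟩⟩
        · exact ⟨X, hX, Or.inr hA⟩
      · intro x hx
        rw [hYrem] at hx
        obtain ⟨hxX, k, hk, A, hA, hxA⟩ := hx
        rcases eq_or_lt_of_le (Nat.succ_le_of_lt hk) with hk1 | hk1
        · have : k = ⟨i + 1, hi1⟩ := Fin.ext hk1.symm
          exact ⟨A, Or.inl (this ▸ hA), hxA⟩
        · exact ⟨rem X hX (i + 1), Or.inr rfl, hxX, k, hk1, A, hA, hxA⟩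
  · -- the last family is uniformly bounded
    refine ⟨D, ?_⟩
    intro A hA
    obtain ⟨X, hX, hcase⟩ := hA
    rcases hcase with ⟨j, hj, hAj⟩ | hArem
    · exact (hU X hX j).2.1 A hAj
    · intro x hx
      rw [hArem] at hx
      obtain ⟨_, k, hk, _⟩ := hx
      exact absurd hk (by omega)
end
end

section
/- If a family U_0 ∪ ... ∪ U_n of subsets covers a metric space X, where each U_i is R_i-disjoint, then there exist metric families V_0, ..., V_n with {X} →^{R_0} V_0 →^{R_1} V_1 →^{R_2} ... →^{R_n} V_n, where V_n is a subfamily of U_0 ∪ ... ∪ U_n (so in particular V_n inherits any uniform property of U_0 ∪ ... ∪ U_n such as uniform boundedness or weak uniform large scale doubling). -/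
open scoped ENNReal
open Filter Set

noncomputable section

/-- a cover of `X` by `R_i`-disjoint families `𝒰 i`,
`i = 0, …, n`, yields a chain of decompositions
`{X} →^{R₀} 𝒱₀ →^{R₁} ⋯ →^{Rₙ} 𝒱ₙ` with `𝒱ₙ` a subfamily of
`𝒰 0 ∪ ⋯ ∪ 𝒰 n`. -/
theorem disjoint_cover_decomposition_chain {α : Type*} [MetricSpace α]
    (R : ℕ → ℝ) (n : ℕ) (𝒰 : ℕ → Set (Set α))
    (hdisj : ∀ i ≤ n, RDisjointD (fun x y : α => dist x y) (R i) (𝒰 i))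
    (hcover : CoversD (⋃ i ≤ n, 𝒰 i)) :
    ∃ 𝒱 : ℕ → Set (Set α),
      DecompD (fun x y : α => dist x y) (R 0) {Set.univ} (𝒱 0) ∧
      (∀ i < n, DecompD (fun x y : α => dist x y) (R (i + 1)) (𝒱 i) (𝒱 (i + 1))) ∧
      𝒱 n ⊆ ⋃ i ≤ n, 𝒰 i := by
  classical
  set d : α → α → ℝ := fun x y => dist x y with hd
  -- residual set after stage i
  set r : ℕ → Set α := fun i => Set.univ \ ⋃₀ (⋃ j ≤ i, 𝒰 j) with hr
  set 𝒱 : ℕ → Set (Set α) :=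
    fun i => (⋃ j ≤ i, 𝒰 j) ∪ ({r i} \ {(∅ : Set α)}) with h𝒱
  have hsub : ∀ S : Set (Set α), S.Subsingleton → ∀ ρ : ℝ, RDisjointD d ρ S := by
    intro S hS ρ A hA B hB hAB
    exact absurd (hS hA hB) hAB
  refine ⟨𝒱, ?_, ?_, ?_⟩
  · -- {univ} →^{R 0} 𝒱 0
    intro X hX
    rcases hX with rfl
    refine ⟨𝒰 0, {r 0} \ {(∅ : Set α)}, hdisj 0 (Nat.zero_le n), ?_, ?_, ?_⟩
    · exact hsub _ (Set.subsingleton_singleton.anti Set.diff_subset) _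
    · intro A hA
      rcases hA with hA | hA
      · exact Or.inl (Set.mem_biUnion (Nat.le_refl 0) hA)
      · exact Or.inr hA
    · intro x _
      by_cases hx : ∃ A ∈ 𝒰 0, x ∈ A
      · rcases hx with ⟨A, hA, hxA⟩
        exact ⟨A, Or.inl hA, hxA⟩
      · have hxr : x ∈ r 0 := by
          refine ⟨trivial, ?_⟩
          rintro ⟨A, hA, hxA⟩
          rcases Set.mem_iUnion₂.1 hA with ⟨j, hj, hAj⟩
          interval_cases j
          exact hx ⟨A, hAj, hxA⟩
        refine ⟨r 0, Or.inr ⟨rfl, ?_⟩, hxr⟩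
        simp only [Set.mem_singleton_iff]
        intro h
        rw [h] at hxr
        exact hxr
  · -- chain decompositions
    intro i hi X hX
    rcases hX with hX | hX
    · -- X is a previously extracted member: trivial decomposition
      refine ⟨{X}, ∅, hsub _ Set.subsingleton_singleton _, hsub _ (by
        exact Set.subsingleton_empty) _, ?_, ?_⟩
      · intro A hA
        rcases hA with hA | hA
        · rcases hA with rfl
          rcases Set.mem_iUnion₂.1 hX with ⟨j, hj, hAj⟩
          exact Or.inl (Set.mem_biUnion (Nat.le_succ_of_le hj) hAj)
        · exact absurd hA (Set.notMem_empty _)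
      · intro x hx
        exact ⟨X, Or.inl rfl, hx⟩
    · -- X is the residual set
      rcases hX with ⟨hXr, _⟩
      simp only [Set.mem_singleton_iff] at hXr
      subst hXr
      refine ⟨𝒰 (i + 1), {r (i + 1)} \ {(∅ : Set α)},
        hdisj (i + 1) (Nat.succ_le_of_lt hi), ?_, ?_, ?_⟩
      · exact hsub _ (Set.subsingleton_singleton.anti Set.diff_subset) _
      · intro A hA
        rcases hA with hA | hA
        · exact Or.inl (Set.mem_biUnion (Nat.le_refl (i + 1)) hA)
        · exact Or.inr hA
      · intro x hx
        by_cases hx' : ∃ A ∈ 𝒰 (i + 1), x ∈ A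
        · rcases hx' with ⟨A, hA, hxA⟩
          exact ⟨A, Or.inl hA, hxA⟩
        · have hxr : x ∈ r (i + 1) := by
            refine ⟨trivial, ?_⟩
            rintro ⟨A, hA, hxA⟩
            rcases Set.mem_iUnion₂.1 hA with ⟨j, hj, hAj⟩
            rcases Nat.lt_or_ge j (i + 1) with hj' | hj'
            · exact hx.2 ⟨A, Set.mem_biUnion (Nat.lt_succ_iff.1 hj') hAj, hxA⟩
            · have : j = i + 1 := le_antisymm hj hj'
              subst this
              exact hx' ⟨A, hAj, hxA⟩
          refine ⟨r (i + 1), Or.inr ⟨rfl, ?_⟩, hxr⟩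
          simp only [Set.mem_singleton_iff]
          intro h
          rw [h] at hxr
          exact hxr
  · -- 𝒱 n is a subfamily of the union
    intro A hA
    rcases hA with hA | hA
    · exact hA
    · rcases hA with ⟨hA1, hA2⟩
      simp only [Set.mem_singleton_iff] at hA1 hA2
      exfalso
      apply hA2
      rw [hA1]
      ext x
      simp only [Set.mem_empty_iff_false, iff_false]
      intro hx
      rcases hcover x with ⟨B, hB, hxB⟩
      exact hx.2 ⟨B, hB, hxB⟩
end
end

section
/- If a metric space X has weak hyperbolic property C, then X has Yu's property A. -/
open scoped ENNReal
open Filter Set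

noncomputable section

/-- Yu's property A for a metric space `X`, in the standard formulation via
finitely supported probability-like functions: for all `ε > 0` and `R > 0`
there are `S > 0` and `ξ : X → (X →₀ ℝ)` with `ξ x` a nonnegative function
summing to `1`, supported in the `S`-ball around `x`, such that
`‖ξ x - ξ y‖₁ ≤ ε` whenever `dist x y ≤ R`. -/
def PropertyA (X : Type*) [MetricSpace X] : Prop :=
  ∀ ε : ℝ, 0 < ε → ∀ R : ℝ, 0 < R →
    ∃ S : ℝ, 0 < S ∧ ∃ ξ : X → (X →₀ ℝ),
      (∀ x z, 0 ≤ ξ x z) ∧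
      (∀ x, ((ξ x).sum fun _ v => v) = 1) ∧
      (∀ x z, ξ x z ≠ 0 → dist x z ≤ S) ∧
      (∀ x y, dist x y ≤ R → (((ξ x) - (ξ y)).sum fun _ v => |v|) ≤ ε)

set_option maxHeartbeats 1000000 in
section
set_option linter.unusedSectionVars false

namespace WHPCaux
variable {X : Type*} [MetricSpace X]



def l1 (f : X →₀ ℝ) : ℝ := f.sum fun _ v => |v|
def tot (f : X →₀ ℝ) : ℝ := f.sum fun _ v => v

lemma l1_eq_sum (f : X →₀ ℝ) (s : Finset X) (hs : f.support ⊆ s) :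
    l1 f = ∑ a ∈ s, |f a| :=
  Finsupp.sum_of_support_subset f hs _ (fun _ _ => abs_zero)

lemma tot_eq_sum (f : X →₀ ℝ) (s : Finset X) (hs : f.support ⊆ s) :
    tot f = ∑ a ∈ s, f a :=
  Finsupp.sum_of_support_subset f hs _ (fun _ _ => rfl)

lemma l1_nonneg (f : X →₀ ℝ) : 0 ≤ l1 f := by
  rw [l1_eq_sum f f.support subset_rfl]
  exact Finset.sum_nonneg fun _ _ => abs_nonneg _

lemma l1_zero : l1 (0 : X →₀ ℝ) = 0 := by simp [l1]

lemma l1_add_le (f g : X →₀ ℝ) : l1 (f + g) ≤ l1 f + l1 g := by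
  classical
  rw [l1_eq_sum (f + g) (f.support ∪ g.support)
      (Finsupp.support_add.trans subset_rfl),
    l1_eq_sum f (f.support ∪ g.support) Finset.subset_union_left,
    l1_eq_sum g (f.support ∪ g.support) Finset.subset_union_right,
    ← Finset.sum_add_distrib]
  exact Finset.sum_le_sum fun a _ => by
    rw [Finsupp.add_apply]; exact abs_add_le _ _

lemma l1_smul (c : ℝ) (f : X →₀ ℝ) : l1 (c • f) = |c| * l1 f := by
  classical
  rw [l1_eq_sum (c • f) f.support (Finsupp.support_smul),
    l1_eq_sum f f.support subset_rfl, Finset.mul_sum]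
  exact Finset.sum_congr rfl fun a _ => by
    rw [Finsupp.smul_apply, smul_eq_mul, abs_mul]

lemma l1_neg (f : X →₀ ℝ) : l1 (-f) = l1 f := by
  have := l1_smul (-1) f; simpa using this

lemma l1_sub_le (f g : X →₀ ℝ) : l1 (f - g) ≤ l1 f + l1 g := by
  rw [sub_eq_add_neg]
  exact (l1_add_le f (-g)).trans (by rw [l1_neg])

lemma l1_sum_le {ι : Type*} (s : Finset ι) (f : ι → X →₀ ℝ) :
    l1 (∑ i ∈ s, f i) ≤ ∑ i ∈ s, l1 (f i) := by
  classical
  induction s using Finset.cons_induction with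
  | empty => simp [l1_zero]
  | cons a s ha ih =>
    rw [Finset.sum_cons, Finset.sum_cons]
    exact (l1_add_le _ _).trans (by linarith)

lemma tot_smul (c : ℝ) (f : X →₀ ℝ) : tot (c • f) = c * tot f := by
  classical
  rw [tot_eq_sum (c • f) f.support Finsupp.support_smul,
    tot_eq_sum f f.support subset_rfl, Finset.mul_sum]
  exact Finset.sum_congr rfl fun a _ => by rw [Finsupp.smul_apply, smul_eq_mul]

lemma tot_sum {ι : Type*} (s : Finset ι) (f : ι → X →₀ ℝ) :
    tot (∑ i ∈ s, f i) = ∑ i ∈ s, tot (f i) := by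
  classical
  induction s using Finset.cons_induction with
  | empty => simp [tot]
  | cons a s ha ih =>
    rw [Finset.sum_cons, Finset.sum_cons, ← ih]
    have : ∀ u v : X →₀ ℝ, tot (u + v) = tot u + tot v := by
      intro u v
      rw [tot_eq_sum (u + v) (u.support ∪ v.support) Finsupp.support_add,
        tot_eq_sum u (u.support ∪ v.support) Finset.subset_union_left,
        tot_eq_sum v (u.support ∪ v.support) Finset.subset_union_right,
        ← Finset.sum_add_distrib]
      exact Finset.sum_congr rfl fun a _ => Finsupp.add_apply u v a
    exact this _ _

lemma l1_eq_tot_of_nonneg (f : X →₀ ℝ) (h : ∀ z, 0 ≤ f z) : l1 f = tot f := by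
  rw [l1_eq_sum f f.support subset_rfl, tot_eq_sum f f.support subset_rfl]
  exact Finset.sum_congr rfl fun a _ => abs_of_nonneg (h a)

lemma l1_smul_sub_smul (a b : ℝ) (hb : 0 ≤ b) (f g : X →₀ ℝ) :
    l1 (a • f - b • g) ≤ |a - b| * l1 f + b * l1 (f - g) := by
  have hid : a • f - b • g = (a - b) • f + b • (f - g) := by
    rw [sub_smul, smul_sub]; abel
  rw [hid]
  refine (l1_add_le _ _).trans ?_
  rw [l1_smul, l1_smul, abs_of_nonneg hb]

lemma l1_smul_sub_smul' (a b : ℝ) (ha : 0 ≤ a) (hb : 0 ≤ b) (f g : X →₀ ℝ) :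
    l1 (a • f - b • g) ≤ a * l1 f + b * l1 g := by
  refine (l1_sub_le _ _).trans ?_
  rw [l1_smul, l1_smul, abs_of_nonneg ha, abs_of_nonneg hb]


def unif (W : Finset X) : X →₀ ℝ :=
  (W.card : ℝ)⁻¹ • Finsupp.indicator W fun _ _ => 1

lemma unif_apply_mem {W : Finset X} {a : X} (ha : a ∈ W) :
    unif W a = (W.card : ℝ)⁻¹ := by
  classical
  rw [unif, Finsupp.smul_apply, Finsupp.indicator_apply, dif_pos ha, smul_eq_mul, mul_one]

lemma unif_apply_not_mem {W : Finset X} {a : X} (ha : a ∉ W) :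
    unif W a = 0 := by
  classical
  rw [unif, Finsupp.smul_apply, Finsupp.indicator_apply, dif_neg ha, smul_eq_mul, mul_zero]

lemma unif_nonneg (W : Finset X) (a : X) : 0 ≤ unif W a := by
  classical
  by_cases ha : a ∈ W
  · rw [unif_apply_mem ha]; positivity
  · rw [unif_apply_not_mem ha]

lemma unif_support (W : Finset X) : (unif W).support ⊆ W := by
  intro a ha
  rw [Finsupp.mem_support_iff] at ha
  by_contra h
  exact ha (unif_apply_not_mem h)

lemma unif_tot (W : Finset X) (hW : W.Nonempty) : tot (unif W) = 1 := by
  rw [tot_eq_sum (unif W) W (unif_support W)]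
  rw [Finset.sum_congr rfl (fun a ha => unif_apply_mem ha), Finset.sum_const, nsmul_eq_mul]
  have : (W.card : ℝ) ≠ 0 := by
    have := Finset.card_pos.mpr hW; positivity
  field_simp

lemma unif_l1 (W : Finset X) (hW : W.Nonempty) : l1 (unif W) = 1 := by
  rw [l1_eq_sum (unif W) W (unif_support W),
    Finset.sum_congr rfl (fun a ha => abs_of_nonneg (unif_nonneg W a)),
    ← tot_eq_sum (unif W) W (unif_support W)]
  exact unif_tot W hW

lemma l1_unif_sub_le (A B C : Finset X) (hCA : C ⊆ A) (hCB : C ⊆ B)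
    (hA : A.Nonempty) (hB : B.Nonempty) (b : ℕ)
    (hAb : A.card ≤ b) (hBb : B.card ≤ b) :
    l1 (unif A - unif B) ≤ 2 - 2 * C.card / b := by
  classical
  have hb : 0 < b := lt_of_lt_of_le (Finset.card_pos.mpr hA) hAb
  have hbR : (0:ℝ) < b := by exact_mod_cast hb
  have hAc : (0:ℝ) < A.card := by exact_mod_cast Finset.card_pos.mpr hA
  have hBc : (0:ℝ) < B.card := by exact_mod_cast Finset.card_pos.mpr hB
  have hsupp : (unif A - unif B).support ⊆ A ∪ B :=
    (Finsupp.support_sub).trans (Finset.union_subset_union (unif_support A) (unif_support B))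
  rw [l1_eq_sum _ (A ∪ B) hsupp]
  have hpt : ∀ a ∈ A ∪ B, |(unif A - unif B) a| ≤
      unif A a + unif B a - (if a ∈ C then 2 / (b:ℝ) else 0) := by
    intro a _
    rw [Finsupp.sub_apply]
    by_cases hc : a ∈ C
    · rw [if_pos hc]
      have haA : a ∈ A := hCA hc
      have haB : a ∈ B := hCB hc
      rw [unif_apply_mem haA, unif_apply_mem haB]
      have h1 : 1 / (b:ℝ) ≤ (A.card : ℝ)⁻¹ := by
        rw [one_div]
        exact inv_anti₀ hAc (by exact_mod_cast hAb)
      have h2 : 1 / (b:ℝ) ≤ (B.card : ℝ)⁻¹ := by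
        rw [one_div]
        exact inv_anti₀ hBc (by exact_mod_cast hBb)
      have h3 : 2 / (b:ℝ) = 2 * (1 / b) := by ring
      rw [abs_sub_le_iff, h3]
      constructor <;> linarith [h1, h2]
    · rw [if_neg hc, sub_zero]
      exact (abs_sub _ _).trans (le_of_eq (by
        rw [abs_of_nonneg (unif_nonneg A a), abs_of_nonneg (unif_nonneg B a)]))
  refine (Finset.sum_le_sum hpt).trans ?_
  rw [Finset.sum_sub_distrib, Finset.sum_add_distrib]
  have hA1 : ∑ a ∈ A ∪ B, unif A a = 1 := by
    rw [← tot_eq_sum (unif A) (A ∪ B) ((unif_support A).trans Finset.subset_union_left)]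
    exact unif_tot A hA
  have hB1 : ∑ a ∈ A ∪ B, unif B a = 1 := by
    rw [← tot_eq_sum (unif B) (A ∪ B) ((unif_support B).trans Finset.subset_union_right)]
    exact unif_tot B hB
  have hCsum : (∑ a ∈ A ∪ B, if a ∈ C then 2 / (b:ℝ) else 0) = C.card * (2 / b) := by
    rw [← Finset.sum_subset (hCA.trans Finset.subset_union_left)
      (fun x _ hx => if_neg hx)]
    rw [Finset.sum_congr rfl (fun x hx => if_pos hx), Finset.sum_const, nsmul_eq_mul]
  rw [hA1, hB1, hCsum]
  have h0 : (0:ℝ) ≤ C.card := by positivity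
  have : (C.card : ℝ) * (2 / b) = 2 * C.card / b := by ring
  rw [this]
  linarith


lemma exists_net (U : Set X) (S₁ : ℝ) (hS₁ : 0 ≤ S₁) :
    ∃ Z ⊆ U, (Z.Pairwise fun a b => 3 * S₁ < dist a b) ∧
      ∀ u ∈ U, ∃ z ∈ Z, dist u z ≤ 3 * S₁ := by
  classical
  set 𝒮 : Set (Set X) := {Z | Z ⊆ U ∧ Z.Pairwise fun a b => 3 * S₁ < dist a b}
  obtain ⟨Z, hZmax⟩ := zorn_subset 𝒮 (by
    intro c hc hchain
    refine ⟨⋃₀ c, ⟨?_, ?_⟩, fun s hs => subset_sUnion_of_mem hs⟩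
    · exact sUnion_subset fun s hs => (hc hs).1
    · intro a ha b hb hab
      obtain ⟨s, hs, has⟩ := ha
      obtain ⟨t, ht, hbt⟩ := hb
      rcases hchain.total hs ht with h | h
      · exact (hc ht).2 (h has) hbt hab
      · exact (hc hs).2 has (h hbt) hab)
  obtain ⟨⟨hZU, hsep⟩, hmax⟩ := hZmax
  refine ⟨Z, hZU, hsep, ?_⟩
  intro u hu
  by_contra hcon
  push_neg at hcon
  have hnotZ : u ∉ Z := fun h => by
    have := hcon u h
    simp at this
    linarith
  have hins : insert u Z ∈ 𝒮 := by
    constructor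
    · exact insert_subset hu hZU
    · rw [Set.pairwise_insert]
      refine ⟨hsep, fun b hb hub => ?_⟩
      have := hcon b hb
      constructor
      · linarith
      · rw [dist_comm]; linarith
  have := hmax hins (subset_insert u Z)
  exact hnotZ (this (mem_insert u Z))

lemma net_count (N : ℕ) (hN : 1 ≤ N) (S₁ : ℝ) (hS₁ : 1 ≤ S₁) (U : Set X)
    (hU : LSDoubling dist N S₁ U) (Z : Set X) (hZU : Z ⊆ U)
    (hsep : Z.Pairwise fun a b => 3 * S₁ < dist a b) :
    ∀ (m : ℕ) (x : X) (r : ℝ), r ≤ S₁ * (1 + 2 ^ m / 2) →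
      ∃ F : Finset X, (Z ∩ {y | dist x y ≤ r} ⊆ ↑F) ∧ F.card ≤ N ^ m := by
  classical
  have hS₁0 : 0 < S₁ := lt_of_lt_of_le one_pos hS₁
  intro m
  induction m with
  | zero =>
    intro x r hr
    by_cases hne : (Z ∩ {y | dist x y ≤ r}).Nonempty
    · obtain ⟨z₀, hz₀Z, hz₀d⟩ := hne
      refine ⟨{z₀}, ?_, by simp⟩
      rintro z ⟨hzZ, hzd⟩
      simp only [Finset.coe_singleton, mem_singleton_iff]
      by_contra hzz
      have h3 : 3 * S₁ < dist z z₀ := hsep hzZ hz₀Z hzz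
      have : dist z z₀ ≤ dist z x + dist x z₀ := dist_triangle _ _ _
      rw [dist_comm z x] at this
      simp only [mem_setOf_eq] at hzd hz₀d
      have hr' : r ≤ S₁ * (3 / 2) := by norm_num at hr ⊢; linarith
      linarith
    · exact ⟨∅, fun z hz => absurd ⟨z, hz⟩ hne, by simp⟩
  | succ m ih =>
    intro x r hr
    by_cases hcase : r ≤ S₁ * (1 + 2 ^ m / 2)
    · obtain ⟨F, h1, h2⟩ := ih x r hcase
      exact ⟨F, h1, h2.trans (Nat.pow_le_pow_right hN (Nat.le_succ m))⟩
    · push_neg at hcase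
      set r' := (r + S₁) / 2 with hr'def
      have hrS : S₁ ≤ r := by
        have : S₁ * (1 + (2:ℝ) ^ m / 2) ≥ S₁ * 1 := by
          have : (0:ℝ) < 2 ^ m := by positivity
          nlinarith
        linarith [hcase, this]
      have hr'1 : S₁ ≤ r' := by rw [hr'def]; linarith
      have hr'2 : r < 2 * r' := by rw [hr'def]; linarith
      have hr'3 : r' ≤ S₁ * (1 + 2 ^ m / 2) := by
        rw [hr'def]
        have : r ≤ S₁ * (1 + 2 ^ (m + 1) / 2) := hr
        have h2m : (2:ℝ) ^ (m + 1) = 2 * 2 ^ m := by ring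
        nlinarith
      obtain ⟨c, hc⟩ := hU x r' hr'1
      choose F hF1 hF2 using fun j => ih (c j) r' hr'3
      refine ⟨Finset.univ.biUnion fun j => F j, ?_, ?_⟩
      · rintro z ⟨hzZ, hzd⟩
        simp only [mem_setOf_eq] at hzd
        have hz2 : z ∈ {y | dist x y < 2 * r'} ∩ U :=
          ⟨by simp only [mem_setOf_eq]; linarith, hZU hzZ⟩
        have hz3 := hc hz2
        rw [mem_iUnion] at hz3
        obtain ⟨j, hzs⟩ := hz3
        have : z ∈ Z ∩ {y | dist (c j) y ≤ r'} := ⟨hzZ, hzs⟩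
        have := hF1 j this
        simp only [Finset.coe_biUnion, Finset.mem_coe, Set.mem_iUnion]
        exact ⟨j, Finset.mem_univ j, this⟩
      · refine (Finset.card_biUnion_le).trans ?_
        calc ∑ j : Fin N, (F j).card ≤ ∑ _j : Fin N, N ^ m :=
              Finset.sum_le_sum fun j _ => hF2 j
          _ = N * N ^ m := by simp [Finset.sum_const, mul_comm]
          _ = N ^ (m + 1) := by ring



lemma sq_le_two_pow : ∀ m : ℕ, 4 ≤ m → m * m ≤ 2 ^ m := by
  intro m hm
  induction m, hm using Nat.le_induction with
  | base => norm_num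
  | succ m hm ih =>
    have h1 : 2 * m + 1 ≤ m * m := by nlinarith
    have : (m + 1) * (m + 1) = m * m + (2 * m + 1) := by ring
    rw [this, pow_succ]
    omega

lemma exists_two_pow (D E : ℝ) : ∃ m : ℕ, D * m + E ≤ 2 ^ m := by
  set D' := max D 0 with hD'
  set E' := max E 0 with hE'
  have hD0 : 0 ≤ D' := le_max_right _ _
  have hE0 : 0 ≤ E' := le_max_right _ _
  set m := ⌈D' + E'⌉₊ + 4 with hm
  refine ⟨m, ?_⟩
  have hm4 : 4 ≤ m := by omega
  have hm1 : (1:ℝ) ≤ m := by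
    have : (4:ℝ) ≤ m := by exact_mod_cast hm4
    linarith
  have step1 : D * m + E ≤ D' * m + E' * m := by
    have h1 : D ≤ D' := le_max_left _ _
    have h2 : E ≤ E' := le_max_left _ _
    nlinarith
  have step2 : D' * m + E' * m ≤ (m:ℝ) * m := by
    have : D' + E' ≤ (m:ℝ) := by
      have h1 : D' + E' ≤ (⌈D' + E'⌉₊ : ℝ) := Nat.le_ceil _
      have h2 : ((⌈D' + E'⌉₊ : ℕ) : ℝ) ≤ m := by
        have : ⌈D' + E'⌉₊ ≤ m := by omega
        exact_mod_cast this
      linarith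
    nlinarith
  have step3 : (m:ℝ) * m ≤ 2 ^ m := by
    have := sq_le_two_pow m hm4
    exact_mod_cast this
  linarith

lemma log_count_bound (c b : ℕ) (hc : 1 ≤ c) (hcb : c ≤ b) :
    (2:ℝ) - 2 * c / b ≤ 2 * (Real.log b - Real.log c) := by
  have hcR : (0:ℝ) < c := by exact_mod_cast hc
  have hbR : (0:ℝ) < b := by exact_mod_cast lt_of_lt_of_le hc hcb
  have h1 : Real.log ((c:ℝ) / b) ≤ (c:ℝ) / b - 1 :=
    Real.log_le_sub_one_of_pos (by positivity)
  rw [Real.log_div (ne_of_gt hcR) (ne_of_gt hbR)] at h1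
  have h2 : 2 * (c:ℝ) / b = 2 * ((c:ℝ)/b) := by ring
  rw [h2]
  linarith


lemma pieceA (N : ℕ) (hN : 1 ≤ N) (S ε R' : ℝ) (hε : 0 < ε) (hR' : 0 < R') :
    ∃ S' : ℝ, 0 < S' ∧ ∀ U : Set X, LSDoubling dist N S U →
      ∃ ξ : X → X →₀ ℝ,
        (∀ u ∈ U, ∀ z, 0 ≤ ξ u z) ∧
        (∀ u ∈ U, tot (ξ u) = 1) ∧
        (∀ u ∈ U, ∀ z, ξ u z ≠ 0 → dist u z ≤ S') ∧
        (∀ u ∈ U, ∀ v ∈ U, dist u v ≤ R' → l1 (ξ u - ξ v) ≤ ε) := by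
  classical
  set S₁ := max S 1 with hS₁def
  have hS₁ : 1 ≤ S₁ := le_max_right _ _
  have hS₁0 : 0 < S₁ := lt_of_lt_of_le one_pos hS₁
  set L := Real.log N with hLdef
  have hL0 : 0 ≤ L := Real.log_nonneg (by exact_mod_cast hN)
  obtain ⟨m, hm⟩ := exists_two_pow ((8 * L * R') / (ε * S₁)) ((4 * S₁ + 10 * R') / S₁)
  set K := ⌈2 * m * L / ε⌉₊ + 1 with hKdef
  have hK1 : 1 ≤ K := by omega
  have hKpos : (0:ℝ) < K := by positivity
  have hKe : 2 * m * L ≤ ε * K := by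
    have h1 : 2 * m * L / ε ≤ (⌈2 * m * L / ε⌉₊ : ℝ) := Nat.le_ceil _
    have h2 : ((⌈2 * m * L / ε⌉₊ : ℕ) : ℝ) ≤ K := by
      rw [hKdef]; push_cast; linarith
    have h3 : 2 * m * L / ε ≤ (K:ℝ) := h1.trans h2
    calc 2 * m * L = (2 * m * L / ε) * ε := by field_simp
      _ ≤ (K:ℝ) * ε := mul_le_mul_of_nonneg_right h3 (le_of_lt hε)
      _ = ε * K := by ring
  have hKle : (K:ℝ) ≤ 2 * m * L / ε + 2 := by
    have h0 : (0:ℝ) ≤ 2 * m * L / ε := by positivity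
    have := Nat.ceil_lt_add_one h0
    rw [hKdef]; push_cast; linarith
  have hscale : 3 * S₁ + (2 * K + 1) * R' ≤ S₁ * (1 + 2 ^ m / 2) := by
    have h2 : S₁ / 2 * ((8 * L * R') / (ε * S₁) * m + (4 * S₁ + 10 * R') / S₁)
        ≤ S₁ / 2 * 2 ^ m := by nlinarith
    have h3 : S₁ / 2 * ((8 * L * R') / (ε * S₁) * m) = (4 * L * R' / ε) * m := by
      field_simp; ring
    have h4 : S₁ / 2 * ((4 * S₁ + 10 * R') / S₁) = 2 * S₁ + 5 * R' := by
      field_simp; ring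
    have h5 : (2 * (K:ℝ) + 1) * R' ≤ (4 * m * L / ε) * R' + 5 * R' := by
      have hd : 4 * (m:ℝ) * L / ε = 2 * (2 * m * L / ε) := by ring
      have : 2 * (K:ℝ) + 1 ≤ 4 * m * L / ε + 5 := by rw [hd]; linarith
      nlinarith
    have h6 : (4 * m * L / ε) * R' = (4 * L * R' / ε) * m := by ring
    rw [mul_add] at h2
    rw [h3, h4] at h2
    nlinarith
  clear_value K
  refine ⟨3 * S₁ + (2 * K + 1) * R' + 1, by positivity, ?_⟩
  intro U hLSD
  have hU1 : LSDoubling dist N S₁ U := fun x r hr =>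
    hLSD x r (le_trans (le_max_left S 1) hr)
  obtain ⟨Z, hZU, hsep, hnet⟩ := exists_net U S₁ (le_of_lt hS₁0)
  have hWfin : ∀ (x : X) (ρ : ℝ), (Z ∩ {y | dist x y ≤ ρ}).Finite := by
    intro x ρ
    obtain ⟨m', hm'⟩ := exists_two_pow 0 (2 * ρ / S₁)
    obtain ⟨F, hF, _⟩ := net_count N hN S₁ hS₁ U hU1 Z hZU hsep m' x ρ (by
      have h1 : 2 * ρ / S₁ ≤ 2 ^ m' := by simpa using hm'
      have h2 : 2 * ρ ≤ 2 ^ m' * S₁ := by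
        rw [div_le_iff₀ hS₁0] at h1; linarith
      nlinarith)
    exact Set.Finite.subset F.finite_toSet hF
  set W : X → ℝ → Finset X := fun u ρ => (hWfin u ρ).toFinset with hWdef
  have hWmem : ∀ u ρ z, z ∈ W u ρ ↔ z ∈ Z ∧ dist u z ≤ ρ := by
    intro u ρ z
    rw [hWdef]
    simp [Set.Finite.mem_toFinset]
  have hWmono : ∀ (u : X) {ρ ρ' : ℝ}, ρ ≤ ρ' → W u ρ ⊆ W u ρ' := by
    intro u ρ ρ' h z hz
    rw [hWmem] at *
    exact ⟨hz.1, hz.2.trans h⟩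
  have hWtrans : ∀ {u v : X} {t ρ : ℝ}, dist u v ≤ t → W u ρ ⊆ W v (ρ + t) := by
    intro u v t ρ h z hz
    rw [hWmem] at *
    refine ⟨hz.1, ?_⟩
    calc dist v z ≤ dist v u + dist u z := dist_triangle _ _ _
      _ ≤ t + ρ := by rw [dist_comm v u]; exact add_le_add h hz.2
      _ = ρ + t := by ring
  have hWne : ∀ u ∈ U, ∀ ρ : ℝ, 3 * S₁ ≤ ρ → (W u ρ).Nonempty := by
    intro u hu ρ hρ
    obtain ⟨z, hzZ, hzd⟩ := hnet u hu
    exact ⟨z, (hWmem u ρ z).mpr ⟨hzZ, hzd.trans hρ⟩⟩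
  have hWcard : ∀ (u : X) (m' : ℕ) (ρ : ℝ), ρ ≤ S₁ * (1 + 2 ^ m' / 2) →
      (W u ρ).card ≤ N ^ m' := by
    intro u m' ρ hρ
    obtain ⟨F, hF, hFc⟩ := net_count N hN S₁ hS₁ U hU1 Z hZU hsep m' u ρ hρ
    refine (Finset.card_le_card ?_).trans hFc
    intro z hz
    rw [hWmem] at hz
    exact hF ⟨hz.1, hz.2⟩
  set ρf : ℕ → ℝ := fun j => 3 * S₁ + j * R' with hρfdef
  have hρmono : ∀ {j j' : ℕ}, j ≤ j' → ρf j ≤ ρf j' := by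
    intro j j' h
    have : (j:ℝ) ≤ j' := by exact_mod_cast h
    simp only [hρfdef]
    nlinarith
  have hρ3 : ∀ j : ℕ, 3 * S₁ ≤ ρf j := by
    intro j
    simp only [hρfdef]
    have : (0:ℝ) ≤ (j:ℝ) * R' := by positivity
    linarith
  set ξ : X → X →₀ ℝ :=
    fun u => (K:ℝ)⁻¹ • ∑ k ∈ Finset.range K, unif (W u (ρf (2 * (k + 1)))) with hξdef
  have happly : ∀ u z, ξ u z =
      (K:ℝ)⁻¹ * ∑ k ∈ Finset.range K, unif (W u (ρf (2 * (k + 1)))) z := by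
    intro u z
    rw [hξdef]
    rw [Finsupp.smul_apply, smul_eq_mul, Finsupp.finset_sum_apply]
  refine ⟨ξ, ?_, ?_, ?_, ?_⟩
  · intro u hu z
    rw [happly]
    refine mul_nonneg (by positivity) (Finset.sum_nonneg fun k _ => unif_nonneg _ z)
  · intro u hu
    rw [hξdef]
    simp only []
    rw [tot_smul, tot_sum]
    have : ∀ k ∈ Finset.range K, tot (unif (W u (ρf (2 * (k + 1))))) = 1 := by
      intro k _
      exact unif_tot _ (hWne u hu _ (hρ3 _))
    rw [Finset.sum_congr rfl this, Finset.sum_const, Finset.card_range, nsmul_eq_mul, mul_one]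
    field_simp
  · intro u hu z hz
    rw [happly] at hz
    have hsum : (∑ k ∈ Finset.range K, unif (W u (ρf (2 * (k + 1)))) z) ≠ 0 := by
      intro h0
      rw [h0, mul_zero] at hz
      exact hz rfl
    obtain ⟨k, hk, hne⟩ := Finset.exists_ne_zero_of_sum_ne_zero hsum
    have hzW : z ∈ W u (ρf (2 * (k + 1))) := by
      by_contra hmem
      exact hne (unif_apply_not_mem hmem)
    rw [hWmem] at hzW
    have hk' : 2 * (k + 1) ≤ 2 * K + 1 := by
      rw [Finset.mem_range] at hk; omega
    have := hzW.2.trans (hρmono hk')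
    simp only [hρfdef] at this
    push_cast at this
    linarith
  · intro u hu v hv huv
    set g : ℕ → ℝ := fun j => Real.log ((W u (ρf (2 * j + 1))).card) with hgdef
    have hcard1 : ∀ j : ℕ, 1 ≤ (W u (ρf (2 * j + 1))).card := by
      intro j
      exact Finset.card_pos.mpr (hWne u hu _ (hρ3 _))
    have key : ∀ k ∈ Finset.range K,
        l1 (unif (W u (ρf (2 * (k + 1)))) - unif (W v (ρf (2 * (k + 1)))))
          ≤ 2 * (g (k + 1) - g k) := by
      intro k _
      set C := W u (ρf (2 * k + 1)) with hCdef
      set A := W u (ρf (2 * (k + 1))) with hAdef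
      set B := W v (ρf (2 * (k + 1))) with hBdef
      set Dn := W u (ρf (2 * (k + 1) + 1)) with hDdef
      have hCA : C ⊆ A := hWmono u (hρmono (by omega))
      have heq1 : ρf (2 * k + 1) + R' = ρf (2 * (k + 1)) := by
        simp only [hρfdef]; push_cast; ring
      have hCB : C ⊆ B := by
        have := hWtrans (u := u) (v := v) (t := R') (ρ := ρf (2 * k + 1)) huv
        rw [heq1] at this
        exact this
      have heq2 : ρf (2 * (k + 1)) + R' = ρf (2 * (k + 1) + 1) := by
        simp only [hρfdef]; push_cast; ring
      have hAD : A ⊆ Dn := hWmono u (hρmono (by omega))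
      have hBD : B ⊆ Dn := by
        have := hWtrans (u := v) (v := u) (t := R') (ρ := ρf (2 * (k + 1)))
          (by rw [dist_comm]; exact huv)
        rw [heq2] at this
        exact this
      have hAne : A.Nonempty := hWne u hu _ (hρ3 _)
      have hBne : B.Nonempty := hWne v hv _ (hρ3 _)
      have h1 := l1_unif_sub_le A B C hCA hCB hAne hBne Dn.card
        (Finset.card_le_card hAD) (Finset.card_le_card hBD)
      have hCD : C ⊆ Dn := hWmono u (hρmono (by omega))
      have h2 := log_count_bound C.card Dn.card (hcard1 k) (Finset.card_le_card hCD)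
      have hgk : g k = Real.log C.card := rfl
      have hgk1 : g (k + 1) = Real.log Dn.card := rfl
      rw [hgk1, hgk]
      linarith
    have hdiff : ξ u - ξ v = (K:ℝ)⁻¹ •
        ∑ k ∈ Finset.range K,
          (unif (W u (ρf (2 * (k + 1)))) - unif (W v (ρf (2 * (k + 1))))) := by
      rw [hξdef]
      simp only []
      rw [← smul_sub, Finset.sum_sub_distrib]
    rw [hdiff, l1_smul, abs_of_nonneg (by positivity : (0:ℝ) ≤ (K:ℝ)⁻¹)]
    have hstep1 : l1 (∑ k ∈ Finset.range K,
        (unif (W u (ρf (2 * (k + 1)))) - unif (W v (ρf (2 * (k + 1)))))) ≤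
        ∑ k ∈ Finset.range K, 2 * (g (k + 1) - g k) :=
      (l1_sum_le _ _).trans (Finset.sum_le_sum key)
    have htele : ∑ k ∈ Finset.range K, 2 * (g (k + 1) - g k) = 2 * (g K - g 0) := by
      rw [← Finset.mul_sum, Finset.sum_range_sub]
    have hg0 : 0 ≤ g 0 := Real.log_nonneg (by exact_mod_cast hcard1 0)
    have hgK : g K ≤ m * L := by
      have hcK : (W u (ρf (2 * K + 1))).card ≤ N ^ m := by
        refine hWcard u m _ ?_
        have : ρf (2 * K + 1) = 3 * S₁ + (2 * K + 1) * R' := by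
          simp only [hρfdef]; push_cast; ring
        rw [this]
        exact hscale
      have hpos : (0:ℝ) < ((W u (ρf (2 * K + 1))).card : ℝ) := by
        exact_mod_cast lt_of_lt_of_le one_pos (hcard1 K)
      have := Real.log_le_log hpos (show ((W u (ρf (2 * K + 1))).card : ℝ) ≤ (N:ℝ) ^ m by
        exact_mod_cast hcK)
      rw [Real.log_pow] at this
      exact this
    have hfinal : (K:ℝ)⁻¹ * (2 * (g K - g 0)) ≤ ε := by
      have h1 : 2 * (g K - g 0) ≤ 2 * (m * L) := by linarith
      have h2 : (K:ℝ)⁻¹ * (2 * (g K - g 0)) ≤ (K:ℝ)⁻¹ * (2 * (m * L)) := by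
        refine mul_le_mul_of_nonneg_left h1 (by positivity)
      refine h2.trans ?_
      rw [inv_mul_le_iff₀ hKpos]
      linarith [hKe]
    calc (K:ℝ)⁻¹ * l1 (∑ k ∈ Finset.range K,
          (unif (W u (ρf (2 * (k + 1)))) - unif (W v (ρf (2 * (k + 1)))))) ≤
        (K:ℝ)⁻¹ * (∑ k ∈ Finset.range K, 2 * (g (k + 1) - g k)) :=
          mul_le_mul_of_nonneg_left hstep1 (by positivity)
      _ = (K:ℝ)⁻¹ * (2 * (g K - g 0)) := by rw [htele]
      _ ≤ ε := hfinal

end WHPCaux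


end

set_option maxHeartbeats 1000000 in
/-- a metric space with weak hyperbolic property C has Yu's
property A. -/
theorem whpc_propertyA {X : Type*} [MetricSpace X]
    (h : WHPCD (fun x y : X => dist x y)) : PropertyA X := by
  classical
  intro ε hε R hR
  by_cases hX : Nonempty X
  case neg =>
    exact ⟨1, one_pos, fun _ => 0, fun x => (hX ⟨x⟩).elim, fun x => (hX ⟨x⟩).elim,
      fun x => (hX ⟨x⟩).elim, fun x => (hX ⟨x⟩).elim⟩
  obtain ⟨x₀⟩ := hX
  set T : ℝ := max 1 (32 * R / ε) with hTdef
  have hT1 : 1 ≤ T := le_max_left _ _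
  have hT0 : 0 < T := lt_of_lt_of_le one_pos hT1
  have hTR : 32 * R / ε ≤ T := le_max_right _ _
  set Rq : ℕ → ℝ := fun i => T * 2 ^ i with hRqdef
  have hRqpos : ∀ i, 0 < Rq i := fun i => by
    simp only [hRqdef]; positivity
  have hRqmono : ∀ {i j : ℕ}, i ≤ j → Rq i ≤ Rq j := by
    intro i j hij
    simp only [hRqdef]
    have h2 : (2:ℝ) ^ i ≤ 2 ^ j := pow_le_pow_right₀ one_le_two hij
    nlinarith
  obtain ⟨n, 𝒰, hdisj, hcover, N, S, hdbl⟩ := h Rq hRqpos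
  set 𝒰' : ℕ → Set (Set X) := fun i => 𝒰 i \ {∅} with h𝒰'def
  have hU'sub : ∀ i, 𝒰' i ⊆ 𝒰 i := fun i => Set.diff_subset
  have hU'ne : ∀ {i : ℕ} {A : Set X}, A ∈ 𝒰' i → A.Nonempty := by
    intro i A hA
    rw [Set.nonempty_iff_ne_empty]
    simpa using hA.2
  have hmemfam : ∀ {i : ℕ} {A : Set X}, i ≤ n → A ∈ 𝒰 i →
      A ∈ ⋃ i, ⋃ (_ : i ≤ n), 𝒰 i := by
    intro i A hi hA
    simp only [Set.mem_iUnion]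
    exact ⟨i, hi, hA⟩
  have hdbl' : ∀ {i : ℕ} {A : Set X}, i ≤ n → A ∈ 𝒰' i → LSDoubling dist N S A := by
    intro i A hi hA
    exact hdbl A (hmemfam hi (hU'sub i hA))
  have hcov' : ∀ x : X, ∃ i ≤ n, ∃ A ∈ 𝒰' i, x ∈ A := by
    intro x
    obtain ⟨A, hA, hx⟩ := hcover x
    simp only [Set.mem_iUnion] at hA
    obtain ⟨i, hi, hAi⟩ := hA
    refine ⟨i, hi, A, ⟨hAi, ?_⟩, hx⟩
    simp only [Set.mem_singleton_iff]
    exact Set.nonempty_iff_ne_empty.mp ⟨x, hx⟩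
  have hN : 1 ≤ N := by
    by_contra hN0
    have hNzero : N = 0 := by omega
    obtain ⟨i, hi, A, hA, hx⟩ := hcov' x₀
    obtain ⟨c, hc⟩ := hdbl' hi hA x₀ (max S 1) (le_max_left _ _)
    have hmem : x₀ ∈ {y | dist x₀ y < 2 * max S 1} ∩ A := by
      refine ⟨?_, hx⟩
      simp only [Set.mem_setOf_eq, dist_self]
      have : (1:ℝ) ≤ max S 1 := le_max_right _ _
      linarith
    have := hc hmem
    rw [Set.mem_iUnion] at this
    obtain ⟨j, _⟩ := this
    rw [hNzero] at j
    exact j.elim0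
  set ε₀ : ℝ := ε / 2 with hε₀def
  have hε₀pos : 0 < ε₀ := by simp only [hε₀def]; positivity
  set R' : ℝ := R + Rq n with hR'def
  have hR'pos : 0 < R' := by
    have := hRqpos n
    simp only [hR'def]; linarith
  obtain ⟨S', hS'0, hpiece⟩ := WHPCaux.pieceA (X := X) N hN S ε₀ R' hε₀pos hR'pos
  have hXifun : ∀ A : Set X, ∃ ξA : X → X →₀ ℝ,
      LSDoubling dist N S A →
        ((∀ u ∈ A, ∀ z, 0 ≤ ξA u z) ∧ (∀ u ∈ A, WHPCaux.tot (ξA u) = 1) ∧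
         (∀ u ∈ A, ∀ z, ξA u z ≠ 0 → dist u z ≤ S') ∧
         (∀ u ∈ A, ∀ v ∈ A, dist u v ≤ R' → WHPCaux.l1 (ξA u - ξA v) ≤ ε₀)) := by
    intro A
    by_cases hA : LSDoubling dist N S A
    · obtain ⟨ξA, h1, h2, h3, h4⟩ := hpiece A hA
      exact ⟨ξA, fun _ => ⟨h1, h2, h3, h4⟩⟩
    · exact ⟨fun _ => 0, fun hA' => absurd hA' hA⟩
  choose Ξ hΞ using hXifun
  set Gate : ℕ → X → Prop := fun i x =>
    ∃ A, A ∈ 𝒰' i ∧ Metric.infDist x A < Rq i / 2 with hGatedef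
  have hApx : ∀ (i : ℕ) (x : X), ∃ A : Set X,
      Gate i x → A ∈ 𝒰' i ∧ Metric.infDist x A < Rq i / 2 := by
    intro i x
    by_cases hg : Gate i x
    · obtain ⟨A, hA⟩ := hg
      exact ⟨A, fun _ => hA⟩
    · exact ⟨∅, fun hg' => absurd hg' hg⟩
  choose Ap hAp using hApx
  have hptx : ∀ (i : ℕ) (x : X), ∃ p : X,
      Gate i x → p ∈ Ap i x ∧ dist x p < Rq i / 2 := by
    intro i x
    by_cases hg : Gate i x
    · have h1 := hAp i x hg
      have hne : (Ap i x).Nonempty := hU'ne h1.1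
      obtain ⟨p, hp1, hp2⟩ := (Metric.infDist_lt_iff hne).mp h1.2
      exact ⟨p, fun _ => ⟨hp1, hp2⟩⟩
    · exact ⟨x, fun hg' => absurd hg' hg⟩
  choose pt hpt using hptx
  have hsetle : ∀ (A B : Set X) (a b : X), a ∈ A → b ∈ B →
      setDistD (fun x y : X => dist x y) A B ≤ ENNReal.ofReal (dist a b) := by
    intro A B a b ha hb
    exact iInf_le_of_le a (iInf_le_of_le ha (iInf_le_of_le b (iInf_le_of_le hb le_rfl)))
  have huniq : ∀ {i : ℕ}, i ≤ n → ∀ (x : X) (B : Set X), B ∈ 𝒰' i →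
      Metric.infDist x B < Rq i / 2 → B = Ap i x := by
    intro i hi x B hB hBd
    have hg : Gate i x := ⟨B, hB, hBd⟩
    obtain ⟨hA1, hA2⟩ := hAp i x hg
    by_contra hneq
    have hdd := hdisj i hi B (hU'sub i hB) (Ap i x) (hU'sub i hA1) hneq
    obtain ⟨b, hbB, hbd⟩ := (Metric.infDist_lt_iff (hU'ne hB)).mp hBd
    obtain ⟨a, haA, had⟩ := (Metric.infDist_lt_iff (hU'ne hA1)).mp hA2
    have hba : dist b a < Rq i := by
      calc dist b a ≤ dist b x + dist x a := dist_triangle _ _ _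
        _ < Rq i / 2 + Rq i / 2 := by
            rw [dist_comm b x]; exact add_lt_add hbd had
        _ = Rq i := by ring
    have h1 : setDistD (fun x y : X => dist x y) B (Ap i x) ≤
        ENNReal.ofReal (dist b a) := hsetle _ _ _ _ hbB haA
    have h2 : ENNReal.ofReal (dist b a) < ENNReal.ofReal (Rq i) :=
      (ENNReal.ofReal_lt_ofReal_iff (hRqpos i)).mpr hba
    exact absurd (hdd.trans_le h1) (not_lt.mpr h2.le)
  set ψ : ℕ → X → ℝ := fun i x =>
    if Gate i x then max 0 (1 - 2 / Rq i * Metric.infDist x (Ap i x)) else 0 with hψdef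
  set P : ℕ → X → X →₀ ℝ := fun i x =>
    if Gate i x then Ξ (Ap i x) (pt i x) else 0 with hPdef
  set Sd : X → ℝ := fun x => ∑ i ∈ Finset.range (n + 1), ψ i x with hSddef
  set ξ : X → X →₀ ℝ := fun x =>
    (Sd x)⁻¹ • ∑ i ∈ Finset.range (n + 1), ψ i x • P i x with hξdef
  have hψ0 : ∀ i x, 0 ≤ ψ i x := by
    intro i x
    simp only [hψdef]
    split
    · exact le_max_left _ _
    · exact le_refl 0
  have hψ1 : ∀ i x, ψ i x ≤ 1 := by
    intro i x
    simp only [hψdef]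
    split
    · have h1 : 0 ≤ 2 / Rq i * Metric.infDist x (Ap i x) := by
        have := hRqpos i
        have := Metric.infDist_nonneg (s := Ap i x) (x := x)
        positivity
      exact max_le (by norm_num) (by linarith)
    · norm_num
  have hψgate : ∀ {i x}, ¬ Gate i x → ψ i x = 0 := by
    intro i x hg
    simp only [hψdef, if_neg hg]
  have hPgate : ∀ {i x}, ¬ Gate i x → P i x = 0 := by
    intro i x hg
    simp only [hPdef, if_neg hg]
  have hSd1 : ∀ x, 1 ≤ Sd x := by
    intro x
    obtain ⟨i, hi, A, hA, hx⟩ := hcov' x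
    have hginf : Metric.infDist x A = 0 := Metric.infDist_zero_of_mem hx
    have hlt : Metric.infDist x A < Rq i / 2 := by
      rw [hginf]
      have := hRqpos i
      linarith
    have hg : Gate i x := ⟨A, hA, hlt⟩
    have hAeq : A = Ap i x := huniq hi x A hA hlt
    have hψi : ψ i x = 1 := by
      simp only [hψdef, if_pos hg, ← hAeq, hginf]
      norm_num
    have hle : ψ i x ≤ Sd x := by
      simp only [hSddef]
      exact Finset.single_le_sum (f := fun j => ψ j x)
        (fun j _ => hψ0 j x) (Finset.mem_range.mpr (by omega))
    rw [hψi] at hle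
    exact hle
  have hSdpos : ∀ x, 0 < Sd x := fun x => lt_of_lt_of_le one_pos (hSd1 x)
  have hPprop : ∀ {i x}, i ≤ n → Gate i x →
      (∀ z, 0 ≤ P i x z) ∧ WHPCaux.tot (P i x) = 1 ∧
        (∀ z, P i x z ≠ 0 → dist (pt i x) z ≤ S') := by
    intro i x hi hg
    have hA := hAp i x hg
    have hdb := hdbl' hi hA.1
    have hΞ' := hΞ (Ap i x) hdb
    have hmemA := (hpt i x hg).1
    simp only [hPdef, if_pos hg]
    exact ⟨fun z => hΞ'.1 _ hmemA z, hΞ'.2.1 _ hmemA, fun z => hΞ'.2.2.1 _ hmemA z⟩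
  have hPz0 : ∀ {i x}, i ≤ n → ∀ z, 0 ≤ P i x z := by
    intro i x hi z
    by_cases hg : Gate i x
    · exact (hPprop hi hg).1 z
    · rw [hPgate hg]; simp
  have hPl1 : ∀ {i x}, i ≤ n → WHPCaux.l1 (P i x) ≤ 1 := by
    intro i x hi
    by_cases hg : Gate i x
    · have hp := hPprop hi hg
      rw [WHPCaux.l1_eq_tot_of_nonneg _ hp.1, hp.2.1]
    · rw [hPgate hg, WHPCaux.l1_zero]; norm_num
  refine ⟨Rq n / 2 + S' + 1, by have := hRqpos n; positivity, ξ, ?_, ?_, ?_, ?_⟩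
  · -- nonneg
    intro x z
    have happly : ξ x z = (Sd x)⁻¹ *
        ∑ i ∈ Finset.range (n + 1), (ψ i x • P i x) z := by
      simp only [hξdef]
      rw [Finsupp.smul_apply, smul_eq_mul, Finsupp.finset_sum_apply]
    rw [happly]
    refine mul_nonneg (by have := hSdpos x; positivity) (Finset.sum_nonneg ?_)
    intro i hi
    rw [Finsupp.smul_apply, smul_eq_mul]
    have hin : i ≤ n := by rw [Finset.mem_range] at hi; omega
    exact mul_nonneg (hψ0 i x) (hPz0 hin z)
  · -- total
    intro x
    show WHPCaux.tot (ξ x) = 1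
    simp only [hξdef]
    rw [WHPCaux.tot_smul, WHPCaux.tot_sum]
    have hterm : ∀ i ∈ Finset.range (n + 1), WHPCaux.tot (ψ i x • P i x) = ψ i x := by
      intro i hi
      have hin : i ≤ n := by rw [Finset.mem_range] at hi; omega
      rw [WHPCaux.tot_smul]
      by_cases hg : Gate i x
      · rw [(hPprop hin hg).2.1, mul_one]
      · rw [hψgate hg, zero_mul]
    rw [Finset.sum_congr rfl hterm]
    exact inv_mul_cancel₀ (ne_of_gt (hSdpos x))
  · -- support
    intro x z hz
    have happly : ξ x z = (Sd x)⁻¹ *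
        ∑ i ∈ Finset.range (n + 1), (ψ i x • P i x) z := by
      simp only [hξdef]
      rw [Finsupp.smul_apply, smul_eq_mul, Finsupp.finset_sum_apply]
    rw [happly] at hz
    have hsum : (∑ i ∈ Finset.range (n + 1), (ψ i x • P i x) z) ≠ 0 := by
      intro h0
      rw [h0, mul_zero] at hz
      exact hz rfl
    obtain ⟨i, hi, hne⟩ := Finset.exists_ne_zero_of_sum_ne_zero hsum
    have hin : i ≤ n := by rw [Finset.mem_range] at hi; omega
    rw [Finsupp.smul_apply, smul_eq_mul] at hne
    have hPne : P i x z ≠ 0 := fun h0 => hne (by rw [h0, mul_zero])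
    have hg : Gate i x := by
      by_contra hg
      exact hPne (by rw [hPgate hg]; simp)
    have hd1 : dist x (pt i x) < Rq i / 2 := (hpt i x hg).2
    have hd2 : dist (pt i x) z ≤ S' := (hPprop hin hg).2.2 z hPne
    have hd3 : Rq i ≤ Rq n := hRqmono hin
    calc dist x z ≤ dist x (pt i x) + dist (pt i x) z := dist_triangle _ _ _
      _ ≤ Rq n / 2 + S' := by linarith
      _ ≤ Rq n / 2 + S' + 1 := by linarith
  · -- variation
    intro x y hxy
    show WHPCaux.l1 (ξ x - ξ y) ≤ ε
    set d := dist x y with hddef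
    have hd0 : 0 ≤ d := dist_nonneg
    have hinfLip : ∀ A : Set X, |Metric.infDist x A - Metric.infDist y A| ≤ d := by
      intro A
      rw [abs_sub_le_iff]
      constructor
      · have := Metric.infDist_le_infDist_add_dist (x := x) (y := y) (s := A)
        linarith [this]
      · have := Metric.infDist_le_infDist_add_dist (x := y) (y := x) (s := A)
        rw [dist_comm y x] at this
        linarith [this]
    set Same : ℕ → Prop := fun i =>
      (Gate i x ∧ Gate i y ∧ Ap i x = Ap i y) ∨ (¬ Gate i x ∧ ¬ Gate i y) with hSamedef
    have hfar : ∀ (i : ℕ) (x' y' : X), Gate i x' →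
        Rq i / 2 ≤ Metric.infDist y' (Ap i x') →
        ψ i x' ≤ 2 / Rq i * dist x' y' := by
      intro i x' y' hg hfar
      have hRi := hRqpos i
      have ha : Metric.infDist y' (Ap i x') ≤ Metric.infDist x' (Ap i x') + dist y' x' :=
        Metric.infDist_le_infDist_add_dist
      rw [dist_comm y' x'] at ha
      have hbound : Rq i / 2 - dist x' y' ≤ Metric.infDist x' (Ap i x') := by linarith
      have hc2 : 2 / Rq i * (Rq i / 2) = 1 := by field_simp
      simp only [hψdef, if_pos hg]
      refine max_le (by positivity) ?_
      have hmul : 2 / Rq i * (Rq i / 2 - dist x' y') ≤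
          2 / Rq i * Metric.infDist x' (Ap i x') :=
        mul_le_mul_of_nonneg_left hbound (by positivity)
      rw [mul_sub, hc2] at hmul
      linarith
    have hfarinf : ∀ (i : ℕ), i ≤ n → ∀ (x' y' : X), Gate i x' →
        (¬ Gate i y' ∨ (Gate i y' ∧ Ap i y' ≠ Ap i x')) →
        Rq i / 2 ≤ Metric.infDist y' (Ap i x') := by
      intro i hi x' y' hgx hcase
      by_contra hlt
      push_neg at hlt
      have hAmem : Ap i x' ∈ 𝒰' i := (hAp i x' hgx).1
      have heq : Ap i x' = Ap i y' := huniq hi y' (Ap i x') hAmem hlt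
      rcases hcase with hng | ⟨hgy, hne⟩
      · exact hng ⟨Ap i x', hAmem, hlt⟩
      · exact hne heq.symm
    have hψdiff : ∀ i, i ≤ n → |ψ i x - ψ i y| ≤ 2 / Rq i * d := by
      intro i hi
      have hRi := hRqpos i
      by_cases hgx : Gate i x <;> by_cases hgy : Gate i y
      · by_cases hAeq : Ap i x = Ap i y
        · -- same piece, Lipschitz of max
          simp only [hψdef, if_pos hgx, if_pos hgy, ← hAeq]
          have key : ∀ a b : ℝ, |max 0 (1 - 2 / Rq i * a) - max 0 (1 - 2 / Rq i * b)|
              ≤ 2 / Rq i * |a - b| := by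
            intro a b
            have h1 : |max 0 (1 - 2 / Rq i * a) - max 0 (1 - 2 / Rq i * b)| ≤
                |(1 - 2 / Rq i * a) - (1 - 2 / Rq i * b)| := by
              rw [max_comm 0 (1 - 2 / Rq i * a), max_comm 0 (1 - 2 / Rq i * b)]
              exact abs_max_sub_max_le_abs _ _ _
            refine h1.trans ?_
            have : (1 - 2 / Rq i * a) - (1 - 2 / Rq i * b) = -(2 / Rq i * (a - b)) := by ring
            rw [this, abs_neg, abs_mul, abs_of_nonneg (by positivity : (0:ℝ) ≤ 2 / Rq i)]
          refine (key _ _).trans ?_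
          exact mul_le_mul_of_nonneg_left (hinfLip (Ap i x)) (by positivity)
        · -- different pieces: both small
          have h1 : ψ i x ≤ 2 / Rq i * d := by
            refine hfar i x y hgx (hfarinf i hi x y hgx (Or.inr ⟨hgy, ?_⟩))
            exact fun hh => hAeq hh.symm
          have h2 : ψ i y ≤ 2 / Rq i * d := by
            have := hfar i y x hgy (hfarinf i hi y x hgy (Or.inr ⟨hgx, fun hh => hAeq hh⟩))
            rw [dist_comm y x] at this
            exact this
          rw [abs_sub_le_iff]
          constructor <;> [linarith [hψ0 i y]; linarith [hψ0 i x]]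
      · have h1 : ψ i x ≤ 2 / Rq i * d := hfar i x y hgx (hfarinf i hi x y hgx (Or.inl hgy))
        rw [hψgate hgy, sub_zero, abs_of_nonneg (hψ0 i x)]
        exact h1
      · have h1 : ψ i y ≤ 2 / Rq i * d := by
          have := hfar i y x hgy (hfarinf i hi y x hgy (Or.inl hgx))
          rw [dist_comm y x] at this
          exact this
        rw [hψgate hgx, zero_sub, abs_neg, abs_of_nonneg (hψ0 i y)]
        exact h1
      · rw [hψgate hgx, hψgate hgy, sub_zero, abs_zero]
        positivity
    have hψmis : ∀ i, i ≤ n → ¬ Same i →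
        ψ i x ≤ 2 / Rq i * d ∧ ψ i y ≤ 2 / Rq i * d := by
      intro i hi hns
      simp only [hSamedef, not_or, not_and] at hns
      by_cases hgx : Gate i x <;> by_cases hgy : Gate i y
      · have hAne : Ap i x ≠ Ap i y := hns.1 hgx hgy
        constructor
        · exact hfar i x y hgx (hfarinf i hi x y hgx (Or.inr ⟨hgy, fun hh => hAne hh.symm⟩))
        · have := hfar i y x hgy (hfarinf i hi y x hgy (Or.inr ⟨hgx, fun hh => hAne hh⟩))
          rw [dist_comm y x] at this
          exact this
      · constructor
        · exact hfar i x y hgx (hfarinf i hi x y hgx (Or.inl hgy))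
        · rw [hψgate hgy]; positivity
      · constructor
        · rw [hψgate hgx]; positivity
        · have := hfar i y x hgy (hfarinf i hi y x hgy (Or.inl hgx))
          rw [dist_comm y x] at this
          exact this
      · exact absurd hgy (hns.2 hgx)
    set lx : ℕ → ℝ := fun i => (Sd x)⁻¹ * ψ i x with hlxdef
    set ly : ℕ → ℝ := fun i => (Sd y)⁻¹ * ψ i y with hlydef
    have hlx0 : ∀ i, 0 ≤ lx i := fun i => mul_nonneg (by have := hSdpos x; positivity) (hψ0 i x)
    have hly0 : ∀ i, 0 ≤ ly i := fun i => mul_nonneg (by have := hSdpos y; positivity) (hψ0 i y)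
    have hlxle : ∀ i, lx i ≤ ψ i x := by
      intro i
      have h1 : (Sd x)⁻¹ ≤ 1 := by
        rw [inv_le_one_iff₀]; right; exact hSd1 x
      simp only [hlxdef]
      nlinarith [hψ0 i x, hSdpos x]
    have hlyle : ∀ i, ly i ≤ ψ i y := by
      intro i
      have h1 : (Sd y)⁻¹ ≤ 1 := by
        rw [inv_le_one_iff₀]; right; exact hSd1 y
      simp only [hlydef]
      nlinarith [hψ0 i y, hSdpos y]
    set q : ℝ := |Sd x - Sd y| / (Sd x * Sd y) with hqdef
    have hq0 : 0 ≤ q := by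
      have := hSdpos x; have := hSdpos y
      simp only [hqdef]; positivity
    have hlxy : ∀ i, |lx i - ly i| ≤ |ψ i x - ψ i y| + ψ i y * q := by
      intro i
      have hSx := hSdpos x
      have hSy := hSdpos y
      have hid : lx i - ly i = (ψ i x - ψ i y) * (Sd x)⁻¹ +
          ψ i y * ((Sd x)⁻¹ - (Sd y)⁻¹) := by
        simp only [hlxdef, hlydef]; ring
      rw [hid]
      refine (abs_add_le _ _).trans ?_
      have h1 : |(ψ i x - ψ i y) * (Sd x)⁻¹| ≤ |ψ i x - ψ i y| := by
        rw [abs_mul, abs_of_nonneg (by positivity : (0:ℝ) ≤ (Sd x)⁻¹)]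
        have h2 : (Sd x)⁻¹ ≤ 1 := by rw [inv_le_one_iff₀]; right; exact hSd1 x
        nlinarith [abs_nonneg (ψ i x - ψ i y)]
      have h3 : |ψ i y * ((Sd x)⁻¹ - (Sd y)⁻¹)| ≤ ψ i y * q := by
        rw [abs_mul, abs_of_nonneg (hψ0 i y)]
        refine mul_le_mul_of_nonneg_left ?_ (hψ0 i y)
        have hinv : (Sd x)⁻¹ - (Sd y)⁻¹ = (Sd y - Sd x) / (Sd x * Sd y) := by
          field_simp
        rw [hinv, hqdef, abs_div, abs_of_nonneg (by positivity : (0:ℝ) ≤ Sd x * Sd y),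
          abs_sub_comm (Sd y) (Sd x)]
      linarith
    have hPsame : ∀ i, i ≤ n → Same i → WHPCaux.l1 (P i x - P i y) ≤ ε₀ := by
      intro i hi hs
      rcases hs with ⟨hgx, hgy, hAeq⟩ | ⟨hgx, hgy⟩
      · have hdb := hdbl' hi (hAp i x hgx).1
        have hΞ' := hΞ (Ap i x) hdb
        have hpx := hpt i x hgx
        have hpy := hpt i y hgy
        have hdpq : dist (pt i x) (pt i y) ≤ R' := by
          have h1 : dist (pt i x) (pt i y) ≤
              dist (pt i x) x + dist x y + dist y (pt i y) := dist_triangle4 _ _ _ _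
          have h2 : dist (pt i x) x = dist x (pt i x) := dist_comm _ _
          have h3 := hpx.2
          have h4 := hpy.2
          have h5 : Rq i ≤ Rq n := hRqmono hi
          simp only [hR'def]
          rw [h2] at h1
          rw [← hddef] at h1
          linarith [hxy]
        have hper := hΞ'.2.2.2 (pt i x) hpx.1 (pt i y) (by rw [hAeq]; exact hpy.1) hdpq
        simp only [hPdef, if_pos hgx, if_pos hgy, ← hAeq]
        exact hper
      · rw [hPgate hgx, hPgate hgy, sub_zero, WHPCaux.l1_zero]
        exact le_of_lt hε₀pos
    set mism : ℕ → ℝ := fun i =>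
      if Same i then 0 else (2 / Rq i * d + 2 / Rq i * d) with hmismdef
    have hmism0 : ∀ i, 0 ≤ mism i := by
      intro i
      simp only [hmismdef]
      split
      · exact le_refl 0
      · have := hRqpos i; positivity
    have hmismle : ∀ i, mism i ≤ 2 / Rq i * d + 2 / Rq i * d := by
      intro i
      simp only [hmismdef]
      split
      · have := hRqpos i; positivity
      · exact le_refl _
    -- master per-index bound
    have hmaster : ∀ i ∈ Finset.range (n + 1),
        WHPCaux.l1 (lx i • P i x - ly i • P i y) ≤
          (|ψ i x - ψ i y| + ψ i y * q) + ly i * ε₀ + mism i := by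
      intro i hir
      have hin : i ≤ n := by rw [Finset.mem_range] at hir; omega
      by_cases hs : Same i
      · have hb1 := WHPCaux.l1_smul_sub_smul (lx i) (ly i) (hly0 i) (P i x) (P i y)
        have hb2 : |lx i - ly i| * WHPCaux.l1 (P i x) ≤ |lx i - ly i| :=
          le_trans (mul_le_mul_of_nonneg_left (hPl1 hin) (abs_nonneg _))
            (by rw [mul_one])
        have hb3 : ly i * WHPCaux.l1 (P i x - P i y) ≤ ly i * ε₀ :=
          mul_le_mul_of_nonneg_left (hPsame i hin hs) (hly0 i)
        have hmg : mism i = 0 := by simp only [hmismdef, if_pos hs]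
        have := hlxy i
        rw [hmg]
        linarith
      · have hb1 := WHPCaux.l1_smul_sub_smul' (lx i) (ly i) (hlx0 i) (hly0 i) (P i x) (P i y)
        have hb2 : lx i * WHPCaux.l1 (P i x) ≤ ψ i x :=
          le_trans (mul_le_mul_of_nonneg_left (hPl1 hin) (hlx0 i))
            (by rw [mul_one]; exact hlxle i)
        have hb3 : ly i * WHPCaux.l1 (P i y) ≤ ψ i y :=
          le_trans (mul_le_mul_of_nonneg_left (hPl1 hin) (hly0 i))
            (by rw [mul_one]; exact hlyle i)
        have hmg : mism i = 2 / Rq i * d + 2 / Rq i * d := by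
          simp only [hmismdef, if_neg hs]
        obtain ⟨hm1, hm2⟩ := hψmis i hin hs
        have h4 : 0 ≤ |ψ i x - ψ i y| + ψ i y * q :=
          add_nonneg (abs_nonneg _) (mul_nonneg (hψ0 i y) hq0)
        have h5 : 0 ≤ ly i * ε₀ := mul_nonneg (hly0 i) (le_of_lt hε₀pos)
        rw [hmg]
        linarith
    -- decompose ξ x - ξ y
    have hξx : ξ x = ∑ i ∈ Finset.range (n + 1), lx i • P i x := by
      simp only [hξdef, hlxdef]
      rw [Finset.smul_sum]
      exact Finset.sum_congr rfl fun i _ => by rw [smul_smul]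
    have hξy : ξ y = ∑ i ∈ Finset.range (n + 1), ly i • P i y := by
      simp only [hξdef, hlydef]
      rw [Finset.smul_sum]
      exact Finset.sum_congr rfl fun i _ => by rw [smul_smul]
    have hdiff : ξ x - ξ y =
        ∑ i ∈ Finset.range (n + 1), (lx i • P i x - ly i • P i y) := by
      rw [hξx, hξy, Finset.sum_sub_distrib]
    rw [hdiff]
    refine le_trans (WHPCaux.l1_sum_le _ _) ?_
    refine le_trans (Finset.sum_le_sum hmaster) ?_
    -- now sum the three parts
    have hgeo : ∑ i ∈ Finset.range (n + 1), 2 / Rq i * d ≤ 4 * d / T := by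
      have hterm : ∀ i ∈ Finset.range (n + 1), 2 / Rq i * d = 2 * d / T * (1 / 2) ^ i := by
        intro i _
        simp only [hRqdef]
        field_simp
        rw [mul_comm ((2:ℝ) ^ i) d, mul_assoc, ← mul_pow]; norm_num
      rw [Finset.sum_congr rfl hterm, ← Finset.mul_sum]
      have hg2 := sum_geometric_two_le (n + 1)
      have h2dT : 0 ≤ 2 * d / T := by positivity
      calc 2 * d / T * ∑ i ∈ Finset.range (n + 1), (1 / 2 : ℝ) ^ i ≤
            2 * d / T * 2 := mul_le_mul_of_nonneg_left hg2 h2dT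
        _ = 4 * d / T := by ring
    have hΔ : ∑ i ∈ Finset.range (n + 1), |ψ i x - ψ i y| ≤ 4 * d / T := by
      refine le_trans (Finset.sum_le_sum ?_) hgeo
      intro i hir
      exact hψdiff i (by rw [Finset.mem_range] at hir; omega)
    have hpart2 : ∑ i ∈ Finset.range (n + 1), ψ i y * q ≤ 4 * d / T := by
      have h1 : ∑ i ∈ Finset.range (n + 1), ψ i y * q = Sd y * q := by
        rw [← Finset.sum_mul]
      rw [h1]
      have hSx := hSdpos x
      have hSy := hSdpos y
      have h2 : |Sd x - Sd y| ≤ ∑ i ∈ Finset.range (n + 1), |ψ i x - ψ i y| := by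
        have : Sd x - Sd y = ∑ i ∈ Finset.range (n + 1), (ψ i x - ψ i y) := by
          simp only [hSddef]
          rw [Finset.sum_sub_distrib]
        rw [this]
        exact Finset.abs_sum_le_sum_abs _ _
      have h3 : Sd y * q = |Sd x - Sd y| / Sd x := by
        simp only [hqdef]
        field_simp
      rw [h3]
      have h4 : |Sd x - Sd y| / Sd x ≤ |Sd x - Sd y| := by
        rw [div_le_iff₀ hSx]
        nlinarith [abs_nonneg (Sd x - Sd y), hSd1 x]
      linarith [h2.trans hΔ]
    have hpart3 : ∑ i ∈ Finset.range (n + 1), ly i * ε₀ = ε₀ := by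
      rw [← Finset.sum_mul]
      have : ∑ i ∈ Finset.range (n + 1), ly i = 1 := by
        simp only [hlydef]
        rw [← Finset.mul_sum]
        exact inv_mul_cancel₀ (ne_of_gt (hSdpos y))
      rw [this, one_mul]
    have hpart4 : ∑ i ∈ Finset.range (n + 1), mism i ≤ 8 * d / T := by
      refine le_trans (Finset.sum_le_sum fun i _ => hmismle i) ?_
      have : ∑ i ∈ Finset.range (n + 1), (2 / Rq i * d + 2 / Rq i * d) =
          2 * ∑ i ∈ Finset.range (n + 1), 2 / Rq i * d := by
        rw [Finset.mul_sum]
        exact Finset.sum_congr rfl fun i _ => by ring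
      rw [this]
      calc 2 * ∑ i ∈ Finset.range (n + 1), 2 / Rq i * d ≤ 2 * (4 * d / T) :=
            mul_le_mul_of_nonneg_left hgeo (by norm_num)
        _ = 8 * d / T := by ring
    rw [Finset.sum_add_distrib, Finset.sum_add_distrib, Finset.sum_add_distrib]
    have hdR : d ≤ R := hxy
    have hfinal : 16 * d / T ≤ ε / 2 := by
      have h32 : 32 * R ≤ ε * T := by
        rw [div_le_iff₀ hε] at hTR
        linarith
      rw [div_le_iff₀ hT0]
      nlinarith
    have hεε : ε₀ = ε / 2 := rfl
    have h16 : 4 * d / T + 4 * d / T + 8 * d / T = 16 * d / T := by ring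
    linarith [hΔ, hpart2, hpart4]
end
end
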